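/- arXiv:2011.14815 — 6 statements merged into one kernel-verified Lean document; each statement's English description precedes it below -/
import Mathlib

section
/- Let R be a Noetherian ring and f_1, …, f_c a regular sequence. Set f = f_1⋯f_c and for a positive integer a let 𝐟^{[a]} denote the ideal (f_1^a, …, f_c^a). Then for integers b > a ≥ 1, the colon ideal (𝐟^{[b]} : f^{b−a}) equals 𝐟^{[a]}. -/
set_option linter.unusedSectionVars false
set_option maxHeartbeats 1000000

open Ideal

section Aux

variable {R : Type*} [CommRing R]

/-- `x` is a nonzerodivisor modulo the ideal `J` (elementwise formulation). -/
def NZM (J : Ideal R) (x : R) : Prop := ∀ z, x * z ∈ J → z ∈ J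

/-- Weakly regular sequence relative to a base ideal `J`, colon-style. -/
def WSeq (J : Ideal R) : List R → Prop
  | [] => True
  | x :: l => NZM J x ∧ WSeq (J ⊔ Ideal.span {x}) l

theorem nzm_pow {J : Ideal R} {x : R} (h : NZM J x) (t : ℕ) : NZM J (x ^ t) := by
  induction t with
  | zero => intro z hz; simpa using hz
  | succ n ih =>
    intro z hz
    have h1 : x ^ n * (x * z) ∈ J := by
      rw [show x ^ n * (x * z) = x ^ (n + 1) * z by ring]; exact hz
    exact h z (ih _ h1)

theorem krull_quot [IsNoetherianRing R] [IsLocalRing R] (J : Ideal R) (z : R)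
    (h : ∀ n, z ∈ J ⊔ (IsLocalRing.maximalIdeal R) ^ n) : z ∈ J := by
  have hmax : (IsLocalRing.maximalIdeal R) ≠ ⊤ := (IsLocalRing.maximalIdeal.isMaximal R).ne_top
  have hbot : (⨅ i : ℕ, (IsLocalRing.maximalIdeal R) ^ i • ⊤ : Submodule R (R ⧸ J)) = ⊥ :=
    Ideal.iInf_pow_smul_eq_bot_of_isLocalRing _ hmax
  have hz : Submodule.Quotient.mk z ∈ (⨅ i : ℕ, (IsLocalRing.maximalIdeal R) ^ i • ⊤ :
      Submodule R (R ⧸ J)) := by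
    rw [Submodule.mem_iInf]
    intro n
    obtain ⟨u, hu, v, hv, huv⟩ := Submodule.mem_sup.mp (h n)
    have : (Submodule.Quotient.mk z : R ⧸ J) = v • (Submodule.Quotient.mk 1 : R ⧸ J) := by
      rw [← Submodule.Quotient.mk_smul, smul_eq_mul, mul_one]
      rw [Submodule.Quotient.eq]
      simpa [← huv] using hu
    rw [this]
    exact Submodule.smul_mem_smul hv trivial
  rw [hbot] at hz
  rwa [Submodule.mem_bot, Submodule.Quotient.mk_eq_zero] at hz

theorem swap_lemma [IsNoetherianRing R] [IsLocalRing R] {J : Ideal R} {x y : R}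
    (hx : x ∈ IsLocalRing.maximalIdeal R)
    (hxJ : NZM J x) (hyJ : NZM (J ⊔ Ideal.span {x}) y) :
    NZM J y ∧ NZM (J ⊔ Ideal.span {y}) x := by
  constructor
  · intro z hz
    apply krull_quot J z
    intro n
    induction n generalizing z with
    | zero => simp
    | succ n ih =>
      have h1 : z ∈ J ⊔ Ideal.span {x} := hyJ z (Ideal.mem_sup_left hz)
      obtain ⟨j, hj, w, hw, hjw⟩ := Submodule.mem_sup.mp h1
      obtain ⟨r, rfl⟩ := Ideal.mem_span_singleton'.mp hw
      have h2 : y * r ∈ J := by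
        apply hxJ
        have : x * (y * r) = y * z - y * j := by rw [← hjw]; ring
        rw [this]
        exact Ideal.sub_mem _ hz (Ideal.mul_mem_left _ _ hj)
      have h3 := ih r h2
      obtain ⟨j', hj', w', hw', hjw'⟩ := Submodule.mem_sup.mp h3
      have hzeq : z = (j + j' * x) + w' * x := by rw [← hjw, ← hjw']; ring
      rw [hzeq]
      refine Submodule.add_mem_sup (Ideal.add_mem _ hj (Ideal.mul_mem_right _ _ hj')) ?_
      rw [pow_succ]
      exact Ideal.mul_mem_mul hw' hx
  · intro z hz
    obtain ⟨j, hj, w, hw, hjw⟩ := Submodule.mem_sup.mp hz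
    obtain ⟨r, rfl⟩ := Ideal.mem_span_singleton'.mp hw
    have h1 : r ∈ J ⊔ Ideal.span {x} := by
      apply hyJ
      have : y * r = x * z - j := by rw [← hjw]; ring
      rw [this]
      refine Submodule.sub_mem _ ?_ (Ideal.mem_sup_left hj)
      exact Ideal.mem_sup_right (Ideal.mem_span_singleton'.mpr ⟨z, mul_comm z x⟩)
    obtain ⟨j', hj', w', hw', hjw'⟩ := Submodule.mem_sup.mp h1
    obtain ⟨s, rfl⟩ := Ideal.mem_span_singleton'.mp hw'
    have h2 : z - s * y ∈ J := by
      apply hxJ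
      have : x * (z - s * y) = j + j' * y := by
        rw [show j = x * z - r * y from by rw [← hjw]; ring, ← hjw']; ring
      rw [this]
      exact Ideal.add_mem _ hj (Ideal.mul_mem_right _ _ hj')
    have hzeq : z = (z - s * y) + s * y := by ring
    rw [hzeq]
    exact Submodule.add_mem_sup h2 (Ideal.mem_span_singleton'.mpr ⟨s, rfl⟩)

theorem wseq_perm [IsNoetherianRing R] [IsLocalRing R] {l l' : List R} (hp : l.Perm l') :
    ∀ J : Ideal R, (∀ x ∈ l, x ∈ IsLocalRing.maximalIdeal R) → WSeq J l → WSeq J l' := by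
  induction hp with
  | nil => exact fun J _ h => h
  | cons x hp ih =>
    intro J hm h
    exact ⟨h.1, ih (J ⊔ Ideal.span {x}) (fun z hz => hm z (List.mem_cons_of_mem _ hz)) h.2⟩
  | swap x y l =>
    intro J hm h
    obtain ⟨h1, h2, h3⟩ := h
    have hy : y ∈ IsLocalRing.maximalIdeal R := hm y (List.mem_cons_self)
    obtain ⟨g1, g2⟩ := swap_lemma hy h1 h2
    refine ⟨g1, g2, ?_⟩
    rwa [sup_right_comm] at h3
  | trans hp1 hp2 ih1 ih2 =>
    intro J hm h
    exact ih2 J (fun z hz => hm z (hp1.mem_iff.mpr hz)) (ih1 J hm h)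

theorem wseq_append_mid {J : Ideal R} {A B : List R} {x : R}
    (h : WSeq J (A ++ x :: B)) : NZM (J ⊔ Ideal.ofList A) x := by
  induction A generalizing J with
  | nil => simpa using h.1
  | cons a A ih =>
    have := ih (J := J ⊔ Ideal.span {a}) h.2
    rwa [Ideal.ofList_cons, ← sup_assoc]

end Aux

section Local

variable {R : Type*} [CommRing R] [IsNoetherianRing R] [IsLocalRing R]
  {c : ℕ} (g : Fin c → R)

/-- span of powers over a finite index set -/
def Kse (S : Finset (Fin c)) (e : Fin c → ℕ) : Ideal R :=
  Ideal.span ((fun i => g i ^ e i) '' ↑S)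

theorem Kse_congr {S : Finset (Fin c)} {e e' : Fin c → ℕ}
    (h : ∀ i ∈ S, e i = e' i) : Kse g S e = Kse g S e' := by
  unfold Kse
  congr 1
  ext x
  constructor <;> rintro ⟨i, hi, rfl⟩ <;> exact ⟨i, hi, by simp [h i (by simpa using hi)]⟩

theorem Kse_insert {S : Finset (Fin c)} {e : Fin c → ℕ} {k : Fin c} :
    Kse g (insert k S) e = Ideal.span {g k ^ e k} ⊔ Kse g S e := by
  unfold Kse
  rw [Finset.coe_insert, Set.image_insert_eq, Ideal.span_insert]

variable {g}

/-- From `WSeq` and all elements in the maximal ideal: any element is a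
nonzerodivisor modulo the span of any subset not containing it. -/
theorem hq_of_wseq (hw : WSeq (⊥ : Ideal R) (List.ofFn g))
    (hm : ∀ i, g i ∈ IsLocalRing.maximalIdeal R)
    (S : Finset (Fin c)) {j : Fin c} (hj : j ∉ S) :
    NZM (Ideal.span (g '' ↑S)) (g j) := by
  classical
  set rest : List (Fin c) := (Finset.univ \ insert j S).sort (· ≤ ·) with hrest
  set idx : List (Fin c) := S.sort (· ≤ ·) ++ j :: rest with hidx
  have hjrest : j ∉ rest := by
    intro hjr
    rw [hrest, Finset.mem_sort] at hjr
    simp at hjr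
  have hnodup : idx.Nodup := by
    rw [hidx]
    refine List.Nodup.append (Finset.sort_nodup _ _) ?_ ?_
    · exact List.Nodup.cons hjrest (Finset.sort_nodup _ _)
    · intro z hz1 hz2
      rw [Finset.mem_sort] at hz1
      rcases List.mem_cons.mp hz2 with rfl | hz2
      · exact hj hz1
      · rw [hrest, Finset.mem_sort, Finset.mem_sdiff] at hz2
        exact hz2.2 (Finset.mem_insert_of_mem hz1)
  have htf : idx.toFinset = (List.finRange c).toFinset := by
    ext i
    rw [hidx, hrest]
    simp only [List.toFinset_append, List.toFinset_cons, Finset.mem_union, List.mem_toFinset,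
      Finset.mem_sort, Finset.mem_insert, List.mem_toFinset, Finset.mem_sdiff, Finset.mem_univ,
      true_and, List.mem_finRange, iff_true]
    by_cases h1 : i ∈ S
    · exact Or.inl h1
    · by_cases h2 : i = j
      · subst h2; exact Or.inr (Or.inl rfl)
      · exact Or.inr (by tauto)
  have hperm : (List.finRange c).Perm idx :=
    (List.perm_of_nodup_nodup_toFinset_eq hnodup (List.nodup_finRange c) htf).symm
  have hperm2 : (List.ofFn g).Perm (idx.map g) := by
    rw [List.ofFn_eq_map]
    exact hperm.map g
  have hw2 : WSeq (⊥ : Ideal R) (idx.map g) := by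
    refine wseq_perm hperm2 ⊥ ?_ hw
    intro x hx
    obtain ⟨i, _, rfl⟩ := List.mem_map.mp (by rw [List.ofFn_eq_map] at hx; exact hx)
    exact hm i
  have hw3 : WSeq (⊥ : Ideal R) ((S.sort (· ≤ ·)).map g ++ g j :: rest.map g) := by
    rwa [hidx, List.map_append, List.map_cons] at hw2
  have := wseq_append_mid hw3
  have heq : Ideal.ofList ((S.sort (· ≤ ·)).map g) = Ideal.span (g '' ↑S) := by
    unfold Ideal.ofList
    congr 1
    ext x
    simp only [Set.mem_setOf_eq, List.mem_map, Finset.mem_sort, Set.mem_image,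
      Finset.mem_coe]
  rwa [heq, bot_sup_eq] at this

theorem nzm_powers (hw : WSeq (⊥ : Ideal R) (List.ofFn g))
    (hm : ∀ i, g i ∈ IsLocalRing.maximalIdeal R) :
    ∀ (N : ℕ) (S : Finset (Fin c)) (e : Fin c → ℕ), (∀ i ∈ S, 1 ≤ e i) →
      (∑ i ∈ S, e i) ≤ N → ∀ j ∉ S, NZM (Kse g S e) (g j) := by
  classical
  intro N
  induction N with
  | zero =>
    intro S e he hsum j hj
    have hS : S = ∅ := by
      by_contra hne
      obtain ⟨i, hi⟩ := Finset.nonempty_iff_ne_empty.mpr hne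
      have h1 := Finset.single_le_sum (f := e) (fun i _ => Nat.zero_le _) hi
      have h2 := he i hi
      omega
    subst hS
    have : Kse g ∅ e = Ideal.span (g '' (↑(∅ : Finset (Fin c)))) := by
      unfold Kse; simp
    rw [this]
    exact hq_of_wseq hw hm ∅ hj
  | succ N IH =>
    intro S e he hsum j hj
    by_cases hex : ∃ k ∈ S, 2 ≤ e k
    · obtain ⟨k, hk, h2⟩ := hex
      set S₀ := S.erase k with hS₀
      have hkS₀ : k ∉ S₀ := Finset.notMem_erase _ _
      have hsum_split : e k + ∑ i ∈ S₀, e i = ∑ i ∈ S, e i := Finset.add_sum_erase _ _ hk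
      have hA : Kse g S e = Ideal.span {g k ^ e k} ⊔ Kse g S₀ e := by
        conv_lhs => rw [← Finset.insert_erase hk]
        rw [Kse_insert]
      set K₀ := Kse g S₀ e with hK₀
      have hpow : g k ^ (e k - 1) * g k = g k ^ e k := by
        rw [← pow_succ]
        congr 1
        omega
      -- membership in K₀ of generators
      have hNZ₀ : NZM K₀ (g k) := by
        refine IH S₀ e (fun i hi => he i (Finset.mem_of_mem_erase hi)) ?_ k hkS₀
        omega
      -- exponent vector lowered at k
      set ebar := Function.update e k (e k - 1) with hebar
      have hKbar : Kse g S ebar = Ideal.span {g k ^ (e k - 1)} ⊔ K₀ := by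
        conv_lhs => rw [← Finset.insert_erase hk]
        rw [Kse_insert]
        congr 1
        · rw [hebar, Function.update_self]
        · rw [hK₀]
          exact Kse_congr g fun i hi => by
            rw [hebar, Function.update_of_ne (Finset.ne_of_mem_erase hi)]
      have hle : Kse g S e ≤ Kse g S ebar := by
        rw [hA, hKbar]
        refine sup_le ?_ le_sup_right
        rw [Ideal.span_singleton_le_iff_mem]
        refine Ideal.mem_sup_left ?_
        rw [← hpow]
        exact Ideal.mul_mem_right _ _ (Ideal.subset_span rfl)
      have hIHbar : NZM (Kse g S ebar) (g j) := by
        refine IH S ebar (fun i hi => ?_) ?_ j hj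
        · by_cases hik : i = k
          · subst hik; rw [hebar, Function.update_self]; omega
          · rw [hebar, Function.update_of_ne hik]; exact he i hi
        · have : ∑ i ∈ S, ebar i = (e k - 1) + ∑ i ∈ S₀, e i := by
            rw [hebar, Finset.sum_update_of_mem hk, Finset.sdiff_singleton_eq_erase]
          omega
      -- the actual argument
      intro z hz
      have hz2 : z ∈ Kse g S ebar := hIHbar z (hle hz)
      rw [hKbar] at hz2
      obtain ⟨p, hp, w, hw, hpw⟩ := Submodule.mem_sup.mp hz2
      obtain ⟨s, rfl⟩ := Ideal.mem_span_singleton'.mp hp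
      have hz3 : g j * (s * g k ^ (e k - 1)) ∈ Kse g S e := by
        have : g j * (s * g k ^ (e k - 1)) = g j * z - g j * w := by rw [← hpw]; ring
        rw [this]
        refine Submodule.sub_mem _ hz ?_
        exact Ideal.mul_mem_left _ _ (hA ▸ Ideal.mem_sup_right hw)
      rw [hA] at hz3
      obtain ⟨p', hp', w', hw', hpw'⟩ := Submodule.mem_sup.mp hz3
      obtain ⟨t, rfl⟩ := Ideal.mem_span_singleton'.mp hp'
      have hkey : g k ^ (e k - 1) * (g j * s - t * g k) ∈ K₀ := by
        have : g k ^ (e k - 1) * (g j * s - t * g k)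
            = g j * (s * g k ^ (e k - 1)) - t * g k ^ e k := by
          rw [← hpow]; ring
        rw [this, ← hpw']
        simpa using hw'
      have hstep : g j * s - t * g k ∈ K₀ := nzm_pow hNZ₀ (e k - 1) _ hkey
      -- now use exponent vector with e k = 1
      set e1 := Function.update e k 1 with he1
      have hK1 : Kse g S e1 = Ideal.span {g k} ⊔ K₀ := by
        conv_lhs => rw [← Finset.insert_erase hk]
        rw [Kse_insert]
        congr 1
        · rw [he1, Function.update_self, pow_one]
        · rw [hK₀]
          exact Kse_congr g fun i hi => by
            rw [he1, Function.update_of_ne (Finset.ne_of_mem_erase hi)]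
      have hgjs : g j * s ∈ Kse g S e1 := by
        rw [hK1]
        have : g j * s = (g j * s - t * g k) + t * g k := by ring
        rw [this]
        exact Submodule.add_mem _ (Ideal.mem_sup_right hstep)
          (Ideal.mem_sup_left (Ideal.mem_span_singleton'.mpr ⟨t, rfl⟩))
      have hs : s ∈ Kse g S e1 := by
        refine IH S e1 (fun i hi => ?_) ?_ j hj s hgjs
        · by_cases hik : i = k
          · subst hik; rw [he1, Function.update_self]
          · rw [he1, Function.update_of_ne hik]; exact he i hi
        · have : ∑ i ∈ S, e1 i = 1 + ∑ i ∈ S₀, e i := by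
            rw [he1, Finset.sum_update_of_mem hk, Finset.sdiff_singleton_eq_erase]
          omega
      rw [hK1] at hs
      obtain ⟨q, hq, w'', hw'', hqw⟩ := Submodule.mem_sup.mp hs
      obtain ⟨u, rfl⟩ := Ideal.mem_span_singleton'.mp hq
      have hzeq : z = u * g k ^ e k + (w'' * g k ^ (e k - 1) + w) := by
        rw [← hpw, ← hqw, ← hpow]; ring
      rw [hzeq, hA]
      refine Submodule.add_mem _ ?_ (Ideal.mem_sup_right ?_)
      · exact Ideal.mem_sup_left (Ideal.mem_span_singleton'.mpr ⟨u, rfl⟩)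
      · exact Submodule.add_mem _ (Ideal.mul_mem_right _ _ hw'') hw
    · push_neg at hex
      have hall : ∀ i ∈ S, e i = 1 := fun i hi => le_antisymm (by
        have := hex i hi; omega) (he i hi)
      have : Kse g S e = Ideal.span (g '' ↑S) := by
        unfold Kse
        congr 1
        ext x
        constructor
        · rintro ⟨i, hi, rfl⟩
          exact ⟨i, hi, by simp [hall i (Finset.mem_coe.mp hi)]⟩
        · rintro ⟨i, hi, rfl⟩
          exact ⟨i, hi, by simp [hall i (Finset.mem_coe.mp hi)]⟩
      rw [this]
      exact hq_of_wseq hw hm S hj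

theorem step_down (hw : WSeq (⊥ : Ideal R) (List.ofFn g))
    (hm : ∀ i, g i ∈ IsLocalRing.maximalIdeal R)
    {S : Finset (Fin c)} {e : Fin c → ℕ} (he : ∀ i ∈ S, 1 ≤ e i)
    {k : Fin c} (hk : k ∈ S) (h2 : 2 ≤ e k) {z : R}
    (hz : g k * z ∈ Kse g S e) : z ∈ Kse g S (Function.update e k (e k - 1)) := by
  classical
  set S₀ := S.erase k with hS₀
  set K₀ := Kse g S₀ e with hK₀
  have hpow : g k ^ (e k - 1) * g k = g k ^ e k := by
    rw [← pow_succ]; congr 1; omega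
  have hA : Kse g S e = Ideal.span {g k ^ e k} ⊔ K₀ := by
    conv_lhs => rw [← Finset.insert_erase hk]
    rw [Kse_insert]
  have hKbar : Kse g S (Function.update e k (e k - 1))
      = Ideal.span {g k ^ (e k - 1)} ⊔ K₀ := by
    conv_lhs => rw [← Finset.insert_erase hk]
    rw [Kse_insert]
    congr 1
    · rw [Function.update_self]
    · rw [hK₀]
      exact Kse_congr g fun i hi => by
        rw [Function.update_of_ne (Finset.ne_of_mem_erase hi)]
  have hNZ₀ : NZM K₀ (g k) := by
    refine nzm_powers hw hm (∑ i ∈ S₀, e i) S₀ e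
      (fun i hi => he i (Finset.mem_of_mem_erase hi)) le_rfl k (Finset.notMem_erase _ _)
  rw [hA] at hz
  obtain ⟨p, hp, w, hwmem, hpw⟩ := Submodule.mem_sup.mp hz
  obtain ⟨t, rfl⟩ := Ideal.mem_span_singleton'.mp hp
  have hkey : g k * (z - t * g k ^ (e k - 1)) ∈ K₀ := by
    have heq : g k * (z - t * g k ^ (e k - 1)) = g k * z - t * g k ^ e k := by
      rw [← hpow]; ring
    rw [heq, ← hpw]
    simpa using hwmem
  have hz2 : z - t * g k ^ (e k - 1) ∈ K₀ := hNZ₀ _ hkey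
  rw [hKbar]
  have : z = t * g k ^ (e k - 1) + (z - t * g k ^ (e k - 1)) := by ring
  rw [this]
  exact Submodule.add_mem _
    (Ideal.mem_sup_left (Ideal.mem_span_singleton'.mpr ⟨t, rfl⟩))
    (Ideal.mem_sup_right hz2)

theorem full_step (hw : WSeq (⊥ : Ideal R) (List.ofFn g))
    (hm : ∀ i, g i ∈ IsLocalRing.maximalIdeal R) :
    ∀ (t : ℕ) (e : Fin c → ℕ), (∀ i, 1 ≤ e i) → ∀ (k : Fin c), t + 1 ≤ e k → ∀ z : R,
      g k ^ t * z ∈ Kse g Finset.univ e →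
      z ∈ Kse g Finset.univ (Function.update e k (e k - t)) := by
  intro t
  induction t with
  | zero =>
    intro e he k hek z hz
    have : Kse g Finset.univ (Function.update e k (e k - 0)) = Kse g Finset.univ e :=
      Kse_congr g fun i _ => by
        by_cases hik : i = k
        · subst hik; rw [Function.update_self]; omega
        · rw [Function.update_of_ne hik]
    rw [this]
    simpa using hz
  | succ t ih =>
    intro e he k hek z hz
    have hz1 : g k * (g k ^ t * z) ∈ Kse g Finset.univ e := by
      have : g k * (g k ^ t * z) = g k ^ (t + 1) * z := by ring
      rw [this]; exact hz
    have hz2 := step_down hw hm (fun i _ => he i) (Finset.mem_univ k) (by omega) hz1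
    have hz3 := ih (Function.update e k (e k - 1))
      (fun i => by
        by_cases hik : i = k
        · subst hik; rw [Function.update_self]; omega
        · rw [Function.update_of_ne hik]; exact he i)
      k (by rw [Function.update_self]; omega) z hz2
    have heq : Kse g Finset.univ
        (Function.update (Function.update e k (e k - 1)) k
          (Function.update e k (e k - 1) k - t))
        = Kse g Finset.univ (Function.update e k (e k - (t + 1))) :=
      Kse_congr g fun i _ => by
        by_cases hik : i = k
        · subst hik; rw [Function.update_self, Function.update_self, Function.update_self]; omega
        · rw [Function.update_of_ne hik, Function.update_of_ne hik, Function.update_of_ne hik]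
    rwa [heq] at hz3

theorem local_main (hw : WSeq (⊥ : Ideal R) (List.ofFn g))
    (hm : ∀ i, g i ∈ IsLocalRing.maximalIdeal R)
    {a b : ℕ} (ha : 1 ≤ a) (hab : a < b) {z : R}
    (hz : (∏ i, g i) ^ (b - a) * z ∈ Ideal.span (Set.range fun i => g i ^ b)) :
    z ∈ Ideal.span (Set.range fun i => g i ^ a) := by
  classical
  set t := b - a with hta
  have hrange : ∀ d : ℕ, Kse g Finset.univ (fun _ => d)
      = Ideal.span (Set.range fun i => g i ^ d) := by
    intro d
    unfold Kse
    rw [← Set.image_univ, Finset.coe_univ]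
  have key : ∀ T : Finset (Fin c), ∀ z : R,
      (∏ i ∈ T, g i ^ t) * z ∈ Kse g Finset.univ (fun _ => b) →
      z ∈ Kse g Finset.univ (fun i => if i ∈ T then b - t else b) := by
    intro T
    induction T using Finset.induction_on with
    | empty =>
      intro z hz
      have h1 : Kse g Finset.univ (fun i => if i ∈ (∅ : Finset (Fin c)) then b - t else b)
          = Kse g Finset.univ (fun _ => b) := Kse_congr g fun i _ => by simp
      rw [h1]
      simpa using hz
    | @insert k T hkT ih =>
      intro z hz
      have hz1 : (∏ i ∈ T, g i ^ t) * (g k ^ t * z) ∈ Kse g Finset.univ (fun _ => b) := by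
        have : (∏ i ∈ T, g i ^ t) * (g k ^ t * z)
            = (∏ i ∈ insert k T, g i ^ t) * z := by
          rw [Finset.prod_insert hkT]; ring
        rw [this]; exact hz
      have hz2 := ih _ hz1
      set E := fun i => if i ∈ T then b - t else b with hE
      have hz3 := full_step hw hm t E
        (fun i => by by_cases hiT : i ∈ T <;> simp [hE, hiT] <;> omega)
        k (by simp [hE, hkT]; omega) z hz2
      have heq : Kse g Finset.univ (Function.update E k (E k - t))
          = Kse g Finset.univ (fun i => if i ∈ insert k T then b - t else b) :=
        Kse_congr g fun i _ => by
          by_cases hik : i = k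
          · subst hik; rw [Function.update_self]; simp [hE, hkT]
          · rw [Function.update_of_ne hik]; simp [hE, Finset.mem_insert, hik]
      rwa [heq] at hz3
  have hz' : (∏ i ∈ Finset.univ, g i ^ t) * z ∈ Kse g Finset.univ (fun _ => b) := by
    rw [Finset.prod_pow, hrange]
    exact hz
  have := key Finset.univ z hz'
  have heq : Kse g Finset.univ (fun i => if i ∈ (Finset.univ : Finset (Fin c)) then b - t else b)
      = Kse g Finset.univ (fun _ => a) := Kse_congr g fun i _ => by simp; omega
  rw [heq, hrange] at this
  exact this

end Local

section Transfer

variable {R : Type*} [CommRing R]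

theorem wseq_of_isWeaklyRegular {l : List R}
    (h : RingTheory.Sequence.IsWeaklyRegular R l) : WSeq (⊥ : Ideal R) l := by
  have hidx : ∀ (i : ℕ) (hi : i < l.length) (z : R),
      l[i] * z ∈ Ideal.ofList (l.take i) → z ∈ Ideal.ofList (l.take i) := by
    intro i hi z hz
    have hsr := h.regular_mod_prev i hi
    have hsmul : (Ideal.ofList (l.take i) • ⊤ : Submodule R R) = Ideal.ofList (l.take i) := by
      rw [smul_eq_mul, mul_top]
    rw [hsmul] at hsr
    have h0 : l[i] • (Submodule.Quotient.mk z : R ⧸ (Ideal.ofList (l.take i) : Submodule R R))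
        = l[i] • (0 : R ⧸ (Ideal.ofList (l.take i) : Submodule R R)) := by
      rw [smul_zero, ← Submodule.Quotient.mk_smul, smul_eq_mul]
      rwa [Submodule.Quotient.mk_eq_zero]
    have := hsr h0
    rwa [← Submodule.Quotient.mk_eq_zero]
  clear h
  have main : ∀ (l : List R) (J : Ideal R),
      (∀ (i : ℕ) (hi : i < l.length) (z : R),
        l[i] * z ∈ J ⊔ Ideal.ofList (l.take i) → z ∈ J ⊔ Ideal.ofList (l.take i)) →
      WSeq J l := by
    intro l
    induction l with
    | nil => exact fun _ _ => trivial
    | cons x l ih =>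
      intro J hJ
      constructor
      · intro z hz
        have h0 := hJ 0 (by simp) z (by simpa using hz)
        simpa using h0
      · refine ih (J ⊔ Ideal.span {x}) ?_
        intro i hi z hz
        have h1 := hJ (i + 1) (by simpa using hi) z
        simp only [List.getElem_cons_succ, List.take_succ_cons, Ideal.ofList_cons,
          ← sup_assoc] at h1
        exact h1 hz
  refine main l ⊥ ?_
  intro i hi z hz
  rw [bot_sup_eq] at hz ⊢
  exact hidx i hi z hz

theorem nzm_map {S : Type*} [CommRing S] (M : Submonoid R) [Algebra R S] [IsLocalization M S]
    {J : Ideal R} {x : R} (h : NZM J x) :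
    NZM (J.map (algebraMap R S)) (algebraMap R S x) := by
  intro w hw
  obtain ⟨⟨r, s⟩, rfl⟩ := IsLocalization.mk'_surjective M w
  have h1 : algebraMap R S (x * r) ∈ J.map (algebraMap R S) := by
    have heq : algebraMap R S (x * r)
        = algebraMap R S x * IsLocalization.mk' S r s * algebraMap R S (s : R) := by
      rw [_root_.map_mul, mul_assoc, IsLocalization.mk'_spec]
    rw [heq]
    exact Ideal.mul_mem_right _ _ hw
  obtain ⟨⟨⟨j, hj⟩, u⟩, hu⟩ := (IsLocalization.mem_map_algebraMap_iff M S).mp h1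
  have h2 : algebraMap R S (x * r * (u : R)) = algebraMap R S j := by
    rw [_root_.map_mul]; exact hu
  obtain ⟨v, hv⟩ := (IsLocalization.eq_iff_exists M S).mp h2
  have h3 : x * (r * (u : R) * (v : R)) ∈ J := by
    have : x * (r * (u : R) * (v : R)) = (v : R) * (x * r * (u : R)) := by ring
    rw [this, hv]
    exact Ideal.mul_mem_left _ _ hj
  have h4 : r * ((u * v : M) : R) ∈ J := by
    have : r * ((u * v : M) : R) = r * (u : R) * (v : R) := by
      rw [Submonoid.coe_mul]; ring
    rw [this]
    exact h (r * (u : R) * (v : R)) h3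
  have h5 : IsLocalization.mk' S r s = IsLocalization.mk' S (r * ((u * v : M) : R)) (s * (u * v)) :=
    (IsLocalization.mk'_cancel r s (u * v)).symm
  dsimp only
  rw [h5, IsLocalization.mk'_eq_mul_mk'_one, mul_comm]
  exact Ideal.mul_mem_left _ _ (Ideal.mem_map_of_mem _ h4)

theorem wseq_map {S : Type*} [CommRing S] (M : Submonoid R) [Algebra R S] [IsLocalization M S]
    {J : Ideal R} {l : List R} (h : WSeq J l) :
    WSeq (J.map (algebraMap R S)) (l.map (algebraMap R S)) := by
  induction l generalizing J with
  | nil => trivial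
  | cons x l ih =>
    refine ⟨nzm_map M h.1, ?_⟩
    have := ih h.2
    rwa [Ideal.map_sup, Ideal.map_span, Set.image_singleton] at this

end Transfer

/-- Let `R` be a Noetherian ring and `f 0, …, f (c-1)` a regular sequence.
Set `F = ∏ f i` and `𝐟^{[a]} = (f 0 ^ a, …, f (c-1) ^ a)`.  Then for `b > a ≥ 1`,
`(𝐟^{[b]} : F^{b-a}) = 𝐟^{[a]}`. -/
theorem statement3 (R : Type) [CommRing R] [IsNoetherianRing R]
    (c : ℕ) (f : Fin c → R)
    (hreg : RingTheory.Sequence.IsRegular R (List.ofFn f))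
    (a b : ℕ) (ha : 1 ≤ a) (hab : a < b) :
    (Ideal.span (Set.range fun i => f i ^ b)).colon
        (Ideal.span {(∏ i, f i) ^ (b - a)})
      = Ideal.span (Set.range fun i => f i ^ a) := by
  apply le_antisymm
  · -- hard direction, via localization at maximal ideals
    intro x hx
    rw [Ideal.mem_colon_span_singleton] at hx
    by_contra hxJ
    have hKne : (Ideal.span (Set.range fun i => f i ^ a)).colon (Ideal.span {x}) ≠ ⊤ := by
      intro hK
      apply hxJ
      have h1 : (1 : R) ∈ (Ideal.span (Set.range fun i => f i ^ a)).colon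
          (Ideal.span {x}) := hK ▸ Submodule.mem_top
      rw [Ideal.mem_colon_span_singleton, one_mul] at h1
      exact h1
    obtain ⟨m, hmax, hKm⟩ := Ideal.exists_le_maximal _ hKne
    haveI : m.IsMaximal := hmax
    haveI : m.IsPrime := hmax.isPrime
    set Rm := Localization.AtPrime m with hRm
    haveI : IsNoetherianRing Rm :=
      IsLocalization.isNoetherianRing m.primeCompl Rm ‹IsNoetherianRing R›
    set G : Fin c → Rm := fun i => algebraMap R Rm (f i) with hG
    have hwG : WSeq (⊥ : Ideal Rm) (List.ofFn G) := by
      have h0 := wseq_map (S := Rm) m.primeCompl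
        (wseq_of_isWeaklyRegular hreg.toIsWeaklyRegular)
      rw [Ideal.map_bot, List.map_ofFn] at h0
      exact h0
    have himg : ∀ d : ℕ, (Ideal.span (Set.range fun i => f i ^ d)).map (algebraMap R Rm)
        = Ideal.span (Set.range fun i => G i ^ d) := by
      intro d
      rw [Ideal.map_span]
      congr 1
      ext y
      constructor
      · rintro ⟨_, ⟨i, rfl⟩, rfl⟩
        exact ⟨i, by rw [hG, map_pow]⟩
      · rintro ⟨i, rfl⟩
        exact ⟨f i ^ d, ⟨i, rfl⟩, by rw [hG, map_pow]⟩
    have hGb : (∏ i, G i) ^ (b - a) * algebraMap R Rm x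
        ∈ Ideal.span (Set.range fun i => G i ^ b) := by
      have h1 : algebraMap R Rm (x * (∏ i, f i) ^ (b - a))
          ∈ (Ideal.span (Set.range fun i => f i ^ b)).map (algebraMap R Rm) :=
        Ideal.mem_map_of_mem _ hx
      rw [himg b] at h1
      have h2 : (∏ i, G i) ^ (b - a) * algebraMap R Rm x
          = algebraMap R Rm (x * (∏ i, f i) ^ (b - a)) := by
        rw [_root_.map_mul, map_pow, map_prod]
        ring
      rw [h2]
      exact h1
    have hmem : algebraMap R Rm x ∈ Ideal.span (Set.range fun i => G i ^ a) := by
      by_cases hu : ∃ i, IsUnit (G i)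
      · obtain ⟨i, hi⟩ := hu
        have hgen : G i ^ a ∈ Ideal.span (Set.range fun i => G i ^ a) :=
          Ideal.subset_span ⟨i, rfl⟩
        have htop : Ideal.span (Set.range fun i => G i ^ a) = ⊤ :=
          Ideal.eq_top_of_isUnit_mem _ hgen (hi.pow a)
        rw [htop]
        exact Submodule.mem_top
      · push_neg at hu
        exact local_main hwG
          (fun i => (IsLocalRing.mem_maximalIdeal _).mpr (mem_nonunits_iff.mpr (hu i)))
          ha hab hGb
    rw [← himg a] at hmem
    obtain ⟨⟨⟨j, hj⟩, u⟩, hu⟩ :=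
      (IsLocalization.mem_map_algebraMap_iff m.primeCompl Rm).mp hmem
    have h2 : algebraMap R Rm (x * (u : R)) = algebraMap R Rm j := by
      rw [_root_.map_mul]; exact hu
    obtain ⟨v, hv⟩ := (IsLocalization.eq_iff_exists m.primeCompl Rm).mp h2
    have h3 : ((u : R) * (v : R)) * x ∈ Ideal.span (Set.range fun i => f i ^ a) := by
      have heq : ((u : R) * (v : R)) * x = (v : R) * (x * (u : R)) := by ring
      rw [heq, hv]
      exact Ideal.mul_mem_left _ _ hj
    have h4 : ((u : R) * (v : R)) ∈ m := by
      apply hKm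
      rw [Ideal.mem_colon_span_singleton]
      exact h3
    exact m.primeCompl.mul_mem u.2 v.2 h4
  · rw [Ideal.span_le]
    rintro y ⟨i, rfl⟩
    rw [SetLike.mem_coe, Ideal.mem_colon_span_singleton]
    have hsplit : f i ^ a * (∏ j, f j) ^ (b - a)
        = f i ^ b * ∏ j ∈ Finset.univ.erase i, f j ^ (b - a) := by
      rw [← Finset.prod_pow,
        ← Finset.mul_prod_erase Finset.univ (fun j => f j ^ (b - a)) (Finset.mem_univ i),
        show f i ^ b = f i ^ a * f i ^ (b - a) by rw [← pow_add]; congr 1; omega]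
      ring
    rw [hsplit]
    exact Ideal.mul_mem_right _ _ (Ideal.subset_span ⟨i, rfl⟩)
end

section
/- Let R be a Noetherian ring and f_1, …, f_c a regular sequence. Set f = f_1⋯f_c. Then for integers b > a ≥ 1, the colon ideal (𝐟^{[b]} : 𝐟^{[a]}) equals f^{b−a}R + 𝐟^{[b]}, where 𝐟^{[t]} = (f_1^t, …, f_c^t). -/
/-!
Two facts about a weakly regular sequence `g₁, …, gₙ` carry the argument: each `gᵢ` is a
nonzerodivisor modulo all the other `gⱼ` (whatever their order), and the powers
`g₁^e₁, …, gₙ^eₙ` again form a weakly regular sequence. Together they give the colon formula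
`(g^[e] : gᵢ^k) = (…, gᵢ^(eᵢ-k), …)` for `k ≤ eᵢ`, and iterating it, the colon by any
monomial.

If `x fᵢ^a ∈ 𝐟^[b]` for all `i`, we show `x ≡ y ∏_{j ∈ t} fⱼ^(b-a)` modulo `𝐟^[b]` for growing
sets `t`. Adding an index `k`, the colon formula applied to `y fₖ^a ∏_{j ∈ t} fⱼ^(b-a) ∈ 𝐟^[b]`
puts `y` in `(fₖ^(b-a), fⱼ^a (j ∈ t), fⱼ^b (j ∉ t ∪ {k}))`, and multiplying back by
`∏_{j ∈ t} fⱼ^(b-a)` kills every generator but the first modulo `𝐟^[b]`.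
-/

namespace Ideal

variable {R : Type*} [CommRing R]

def IsRegularMod (K : Ideal R) (x : R) : Prop :=
  ∀ u, u * x ∈ K → u ∈ K

/-- `l` is a weakly regular sequence on `R ⧸ K`, unfolded so that everything stays inside `R`. -/
def IsWeaklyRegularMod (K : Ideal R) : List R → Prop
  | [] => True
  | x :: l => K.IsRegularMod x ∧ IsWeaklyRegularMod (K ⊔ span {x}) l

variable {K C : Ideal R} {x y r : R} {l : List R}

@[simp]
lemma isWeaklyRegularMod_nil : K.IsWeaklyRegularMod [] := trivial

@[simp]
lemma isWeaklyRegularMod_cons :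
    K.IsWeaklyRegularMod (x :: l) ↔ K.IsRegularMod x ∧ (K ⊔ span {x}).IsWeaklyRegularMod l :=
  Iff.rfl

lemma IsRegularMod.pow (hx : K.IsRegularMod x) (t : ℕ) : K.IsRegularMod (x ^ t) := by
  induction t with
  | zero => simp [IsRegularMod]
  | succ t ih => exact fun u hu => ih u (hx _ (by rwa [mul_assoc, ← pow_succ]))

lemma isWeaklyRegularMod_top (l : List R) : (⊤ : Ideal R).IsWeaklyRegularMod l := by
  induction l with
  | nil => trivial
  | cons x l ih => exact ⟨fun _ _ => Submodule.mem_top, by rwa [top_sup_eq]⟩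

lemma isWeaklyRegularMod_append {l₁ l₂ : List R} :
    K.IsWeaklyRegularMod (l₁ ++ l₂) ↔
      K.IsWeaklyRegularMod l₁ ∧ (K ⊔ ofList l₁).IsWeaklyRegularMod l₂ := by
  induction l₁ generalizing K with
  | nil => simp
  | cons x l ih => simp [ih, sup_assoc, and_assoc]

lemma ofList_ofFn {n : ℕ} (g : Fin n → R) : ofList (List.ofFn g) = span (Set.range g) :=
  congrArg span (Set.ext fun a => List.mem_ofFn' g a)

/-- Regularity of `r` on the outer terms of `0 → R ⧸ (C : y) → R ⧸ C → R ⧸ (C + (y)) → 0`,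
the first map being multiplication by `y`, gives regularity on the middle term. -/
lemma IsRegularMod.of_colon_of_sup (hA : (C.colon {y}).IsRegularMod r)
    (hB : (C ⊔ span {y}).IsRegularMod r) : C.IsRegularMod r := by
  intro u hu
  obtain ⟨c, hc, _, hv, rfl⟩ := Submodule.mem_sup.mp (hB u (mem_sup_left hu))
  obtain ⟨v, rfl⟩ := mem_span_singleton'.mp hv
  have hvr : v * r * y ∈ C := by
    convert C.sub_mem hu (C.mul_mem_right r hc) using 1
    ring
  have hv : v ∈ C.colon {y} := hA v (by simpa using hvr)
  exact C.add_mem hc (by simpa using hv)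

lemma sup_span_singleton_colon (hB : (C ⊔ span {y}).IsRegularMod r) :
    (C ⊔ span {r}).colon {y} = C.colon {y} ⊔ span {r} := by
  refine le_antisymm (fun u hu => ?_) (sup_le (Submodule.colon_mono le_sup_left le_rfl) ?_)
  · obtain ⟨c, hc, _, hw, hcw⟩ := Submodule.mem_sup.mp (by simpa using hu)
    obtain ⟨w, rfl⟩ := mem_span_singleton'.mp hw
    have hwr : w * r ∈ C ⊔ span {y} := by
      rw [show w * r = u * y - c by rw [← hcw]; ring]
      exact sub_mem (mem_sup_right (mem_span_singleton.mpr (dvd_mul_left y u))) (mem_sup_left hc)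
    obtain ⟨c', hc', _, hv, rfl⟩ := Submodule.mem_sup.mp (hB w hwr)
    obtain ⟨v, rfl⟩ := mem_span_singleton'.mp hv
    have huv : (u - v * r) * y ∈ C := by
      convert C.add_mem hc (C.mul_mem_right r hc') using 1
      linear_combination -hcw
    rw [show u = (u - v * r) + v * r by ring]
    exact add_mem (mem_sup_left (by simpa using huv))
      (mem_sup_right (mem_span_singleton.mpr (dvd_mul_left r v)))
  · rw [span_singleton_le_iff_mem, Submodule.mem_colon_singleton, smul_eq_mul]
    exact mem_sup_right (mem_span_singleton.mpr (dvd_mul_right r y))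

lemma IsWeaklyRegularMod.of_colon_of_sup (hA : (C.colon {y}).IsWeaklyRegularMod l)
    (hB : (C ⊔ span {y}).IsWeaklyRegularMod l) : C.IsWeaklyRegularMod l := by
  induction l generalizing C with
  | nil => trivial
  | cons r l ih =>
    obtain ⟨hAr, hA⟩ := hA
    obtain ⟨hBr, hB⟩ := hB
    refine ⟨hAr.of_colon_of_sup hBr, ih ?_ ?_⟩
    · rwa [sup_span_singleton_colon hBr]
    · rwa [sup_right_comm]

lemma sup_span_pow_succ_colon (hx : K.IsRegularMod x) (t : ℕ) :
    (K ⊔ span {x ^ (t + 1)}).colon {x ^ t} = K ⊔ span {x} := by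
  refine le_antisymm (fun u hu => ?_) (sup_le (fun k hk => ?_) ?_)
  · obtain ⟨k, hk, _, hv, hkv⟩ := Submodule.mem_sup.mp (by simpa using hu)
    obtain ⟨v, rfl⟩ := mem_span_singleton'.mp hv
    have huv : (u - v * x) * x ^ t ∈ K := by
      convert hk using 1
      linear_combination -hkv
    rw [show u = (u - v * x) + v * x by ring]
    exact add_mem (mem_sup_left (hx.pow t _ huv))
      (mem_sup_right (mem_span_singleton.mpr (dvd_mul_left x v)))
  · simpa using mem_sup_left (K.mul_mem_right (x ^ t) hk)
  · rw [span_singleton_le_iff_mem, Submodule.mem_colon_singleton, smul_eq_mul, ← pow_succ']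
    exact mem_sup_right (mem_span_singleton_self _)

/-- Uses the exact sequences `0 → R ⧸ (K + (x)) → R ⧸ (K + (xᵗ⁺¹)) → R ⧸ (K + (xᵗ)) → 0`. -/
lemma IsWeaklyRegularMod.sup_span_pow (hx : K.IsRegularMod x)
    (hl : (K ⊔ span {x}).IsWeaklyRegularMod l) (t : ℕ) :
    (K ⊔ span {x ^ t}).IsWeaklyRegularMod l := by
  induction t with
  | zero => simpa using isWeaklyRegularMod_top l
  | succ t ih =>
    refine IsWeaklyRegularMod.of_colon_of_sup (y := x ^ t) ?_ ?_
    · rwa [sup_span_pow_succ_colon hx]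
    · rwa [sup_assoc, sup_eq_right.mpr (span_singleton_le_span_singleton.mpr
        (pow_dvd_pow x t.le_succ))]

lemma IsWeaklyRegularMod.ofFn_pow {n : ℕ} {g : Fin n → R}
    (hg : K.IsWeaklyRegularMod (List.ofFn g)) (e : Fin n → ℕ) :
    K.IsWeaklyRegularMod (List.ofFn fun i => g i ^ e i) := by
  induction n generalizing K with
  | zero => simp
  | succ n ih =>
    rw [List.ofFn_succ] at hg ⊢
    exact ⟨hg.1.pow _, ih (hg.2.sup_span_pow hg.1 (e 0)) _⟩

lemma isWeaklyRegularMod_of_forall_take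
    (h : ∀ i (hi : i < l.length), (K ⊔ ofList (l.take i)).IsRegularMod l[i]) :
    K.IsWeaklyRegularMod l := by
  induction l generalizing K with
  | nil => trivial
  | cons x l ih =>
    have h₀ : (K ⊔ ofList []).IsRegularMod x := h 0 (by simp)
    refine ⟨by simpa using h₀, ih fun i hi => ?_⟩
    have hsucc : (K ⊔ ofList (x :: l.take i)).IsRegularMod l[i] := h (i + 1) (by simpa using hi)
    simpa [sup_assoc] using hsucc

lemma span_range_eq_span_singleton_sup {ι : Type*} (g : ι → R) (i : ι) :
    span (Set.range g) = span {g i} ⊔ span (g '' {i}ᶜ) := by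
  rw [← Set.insert_image_compl_eq_range, span_insert]

/-- The vanishing of the first Koszul homology; no permutability of the sequence is needed. -/
theorem IsWeaklyRegularMod.isRegularMod_sup_span_image_compl {n : ℕ} {g : Fin n → R}
    (hg : K.IsWeaklyRegularMod (List.ofFn g)) (i : Fin n) :
    (K ⊔ span (g '' {i}ᶜ)).IsRegularMod (g i) := by
  induction n with
  | zero => exact i.elim0
  | succ n ih =>
    rw [List.ofFn_succ', List.concat_eq_append, isWeaklyRegularMod_append, ofList_ofFn] at hg
    obtain ⟨hinit, hlast, -⟩ := hg
    induction i using Fin.lastCases with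
    | last =>
      have : g '' {Fin.last n}ᶜ = Set.range fun j : Fin n => g j.castSucc := by
        ext; simp [Fin.exists_fin_succ', Fin.castSucc_ne_last]
      rwa [this]
    | cast i =>
      set P := K ⊔ span ((fun j : Fin n => g j.castSucc) '' {i}ᶜ)
      have hsplit : K ⊔ span (g '' {i.castSucc}ᶜ) = P ⊔ span {g (Fin.last n)} := by
        have : g '' {i.castSucc}ᶜ =
            insert (g (Fin.last n)) ((fun j : Fin n => g j.castSucc) '' {i}ᶜ) := by
          ext; simp [Fin.exists_fin_succ', eq_comm, or_comm]
        rw [this, span_insert, sup_left_comm, sup_comm]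
      have hprefix : K ⊔ span (Set.range fun j : Fin n => g j.castSucc) =
          P ⊔ span {g i.castSucc} := by
        rw [span_range_eq_span_singleton_sup _ i, sup_left_comm, sup_comm]
      rw [hprefix] at hlast
      rw [hsplit]
      intro u hu
      obtain ⟨p, hp, _, hw, hpw⟩ := Submodule.mem_sup.mp hu
      obtain ⟨w, rfl⟩ := mem_span_singleton'.mp hw
      have hwL : w * g (Fin.last n) ∈ P ⊔ span {g i.castSucc} := by
        rw [show w * g (Fin.last n) = u * g i.castSucc - p by rw [← hpw]; ring]
        exact sub_mem (mem_sup_right (mem_span_singleton.mpr (dvd_mul_left _ _)))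
          (mem_sup_left hp)
      obtain ⟨p', hp', _, hβ, rfl⟩ := Submodule.mem_sup.mp (hlast w hwL)
      obtain ⟨β, rfl⟩ := mem_span_singleton'.mp hβ
      have hmod : (u - β * g (Fin.last n)) * g i.castSucc ∈ P := by
        convert P.add_mem hp (P.mul_mem_right (g (Fin.last n)) hp') using 1
        linear_combination -hpw
      rw [show u = (u - β * g (Fin.last n)) + β * g (Fin.last n) by ring]
      exact add_mem (mem_sup_left (ih hinit i _ hmod))
        (mem_sup_right (mem_span_singleton.mpr (dvd_mul_left _ _)))

end Ideal

open Ideal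

namespace RingTheory.Sequence.IsWeaklyRegular

variable {R : Type*} [CommRing R]

lemma isWeaklyRegularMod_bot {l : List R} (h : IsWeaklyRegular R l) :
    (⊥ : Ideal R).IsWeaklyRegularMod l := by
  refine isWeaklyRegularMod_of_forall_take fun i hi u hu => ?_
  have hreg := h.regular_mod_prev i hi
  rw [smul_eq_mul, mul_top] at hreg
  rw [bot_sup_eq] at hu ⊢
  exact mem_of_isSMulRegular_quotient_of_smul_mem hreg (by rwa [smul_eq_mul, mul_comm])

variable {n : ℕ} {g : Fin n → R}

theorem mem_span_range_pow_update_of_mul_pow_mem (hg : IsWeaklyRegular R (List.ofFn g))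
    {e : Fin n → ℕ} {i : Fin n} {k : ℕ} (hk : k ≤ e i) {x : R}
    (hx : x * g i ^ k ∈ span (Set.range fun j => g j ^ e j)) :
    x ∈ span (Set.range fun j => g j ^ Function.update e i (e i - k) j) := by
  have hothers : ∀ e' : ℕ, (fun j => g j ^ Function.update e i e' j) '' {i}ᶜ =
      (fun j => g j ^ e j) '' {i}ᶜ := fun e' =>
    Set.image_congr fun j hj => by rw [Function.update_of_ne hj]
  have hT := (hg.isWeaklyRegularMod_bot.ofFn_pow
    (Function.update e i k)).isRegularMod_sup_span_image_compl i
  rw [hothers, bot_sup_eq, Function.update_self] at hT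
  rw [span_range_eq_span_singleton_sup _ i] at hx ⊢
  rw [hothers, Function.update_self]
  obtain ⟨_, hv, o, ho, hvo⟩ := Submodule.mem_sup.mp hx
  obtain ⟨v, rfl⟩ := mem_span_singleton'.mp hv
  have hrest : (x - v * g i ^ (e i - k)) * g i ^ k ∈ span ((fun j => g j ^ e j) '' {i}ᶜ) := by
    convert ho using 1
    rw [sub_mul, mul_assoc, pow_sub_mul_pow _ hk]
    linear_combination -hvo
  rw [show x = (x - v * g i ^ (e i - k)) + v * g i ^ (e i - k) by ring]
  exact add_mem (mem_sup_right (hT _ hrest))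
    (mem_sup_left (mem_span_singleton.mpr (dvd_mul_left _ _)))

theorem mem_span_range_pow_ite_of_mul_prod_pow_mem (hg : IsWeaklyRegular R (List.ofFn g))
    {e m : Fin n → ℕ} (t : Finset (Fin n)) (hm : ∀ j ∈ t, m j ≤ e j) {x : R}
    (hx : x * ∏ j ∈ t, g j ^ m j ∈ span (Set.range fun j => g j ^ e j)) :
    x ∈ span (Set.range fun j => g j ^ (if j ∈ t then e j - m j else e j)) := by
  induction t using Finset.induction_on generalizing x with
  | empty => simpa using hx
  | insert i t hi ih =>
    rw [Finset.prod_insert hi, ← mul_assoc] at hx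
    have hxi := ih (fun j hj => hm j (Finset.mem_insert_of_mem hj)) hx
    have := hg.mem_span_range_pow_update_of_mul_pow_mem
      (by simpa [hi] using hm i (Finset.mem_insert_self i t)) hxi
    convert this using 5 with j
    by_cases hj : j = i <;> simp [hj, hi]

theorem mem_span_prod_pow_sup_of_forall_mul_pow_mem (hg : IsWeaklyRegular R (List.ofFn g))
    {a b : ℕ} (hab : a ≤ b) {x : R} (hx : ∀ i, x * g i ^ a ∈ span (Set.range fun j => g j ^ b))
    (t : Finset (Fin n)) :
    x ∈ span {∏ j ∈ t, g j ^ (b - a)} ⊔ span (Set.range fun j => g j ^ b) := by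
  induction t using Finset.induction_on with
  | empty => simp
  | insert k t hk ih =>
    set Q := ∏ j ∈ t, g j ^ (b - a)
    set I := span (Set.range fun j => g j ^ b)
    obtain ⟨_, hy, r, hr, rfl⟩ := Submodule.mem_sup.mp ih
    obtain ⟨y, rfl⟩ := mem_span_singleton'.mp hy
    have hyQ : y * Q * g k ^ a ∈ I := by
      convert I.sub_mem (hx k) (I.mul_mem_right (g k ^ a) hr) using 1
      ring
    have hyk := hg.mem_span_range_pow_ite_of_mul_prod_pow_mem (e := fun _ => b)
      (m := fun _ => b - a) t (fun _ _ => Nat.sub_le b a) (x := y * g k ^ a)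
      (by convert hyQ using 1; ring)
    have hy := hg.mem_span_range_pow_update_of_mul_pow_mem (by simpa [hk] using hab) hyk
    have hgen : span (Set.range fun j => g j ^ Function.update
          (fun j => if j ∈ t then b - (b - a) else b) k ((if k ∈ t then b - (b - a) else b) - a) j)
        ≤ (span {g k ^ (b - a) * Q} ⊔ I).colon {Q} := by
      rw [span_le, Set.range_subset_iff]
      intro j
      rw [SetLike.mem_coe, Submodule.mem_colon_singleton, smul_eq_mul]
      by_cases hjk : j = k
      · subst hjk
        simpa [hk] using mem_sup_left (mem_span_singleton_self _)
      rw [Function.update_of_ne hjk]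
      split_ifs with hjt
      · refine mem_sup_right (I.mem_of_dvd ?_ (subset_span ⟨j, rfl⟩))
        calc g j ^ b = g j ^ (b - (b - a)) * g j ^ (b - a) := by
              rw [← pow_add, Nat.sub_add_cancel (Nat.sub_le b a)]
          _ ∣ g j ^ (b - (b - a)) * Q := mul_dvd_mul_left _ (Finset.dvd_prod_of_mem _ hjt)
      · exact mem_sup_right (I.mul_mem_right _ (subset_span ⟨j, rfl⟩))
    rw [Finset.prod_insert hk]
    exact add_mem (by simpa using hgen hy) (mem_sup_right hr)

theorem colon_le_span_singleton_prod_pow_sup (hg : IsWeaklyRegular R (List.ofFn g)) {a b : ℕ}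
    (hab : a ≤ b) :
    (span (Set.range fun i => g i ^ b)).colon (span (Set.range fun i => g i ^ a)) ≤
      span {(∏ i, g i) ^ (b - a)} ⊔ span (Set.range fun i => g i ^ b) := by
  intro x hx
  rw [Ideal.colon_span, Submodule.mem_colon] at hx
  simpa [Finset.prod_pow] using
    hg.mem_span_prod_pow_sup_of_forall_mul_pow_mem hab (fun i => hx _ ⟨i, rfl⟩) Finset.univ

end RingTheory.Sequence.IsWeaklyRegular

theorem Ideal.span_singleton_prod_pow_sup_le_colon {R : Type*} [CommRing R] {n : ℕ}
    (g : Fin n → R) {a b : ℕ} (hab : a ≤ b) :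
    span {(∏ i, g i) ^ (b - a)} ⊔ span (Set.range fun i => g i ^ b) ≤
      (span (Set.range fun i => g i ^ b)).colon (span (Set.range fun i => g i ^ a)) := by
  rw [Ideal.colon_span]
  refine sup_le ?_ le_colon
  rw [span_singleton_le_iff_mem, Submodule.mem_colon]
  rintro _ ⟨i, rfl⟩
  refine mem_of_dvd _ ?_ (subset_span ⟨i, rfl⟩)
  calc g i ^ b = g i ^ (b - a) * g i ^ a := by rw [← pow_add, Nat.sub_add_cancel hab]
    _ ∣ (∏ j, g j) ^ (b - a) * g i ^ a :=
      mul_dvd_mul_right (pow_dvd_pow_of_dvd (Finset.dvd_prod_of_mem _ (Finset.mem_univ i)) _) _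

theorem statement4_general (R : Type) [CommRing R]
    (c : ℕ) (f : Fin c → R)
    (hreg : RingTheory.Sequence.IsRegular R (List.ofFn f))
    (a b : ℕ) (hab : a < b) :
    (Ideal.span (Set.range fun i => f i ^ b)).colon
        (Ideal.span (Set.range fun i => f i ^ a))
      = Ideal.span {(∏ i, f i) ^ (b - a)} ⊔ Ideal.span (Set.range fun i => f i ^ b) :=
  le_antisymm (hreg.toIsWeaklyRegular.colon_le_span_singleton_prod_pow_sup hab.le)
    (span_singleton_prod_pow_sup_le_colon f hab.le)

/-- Let `R` be a Noetherian ring, `f 0, …, f (c-1)` a regular sequence,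
`F = ∏ f i`.  Then for `b > a ≥ 1`, `(𝐟^{[b]} : 𝐟^{[a]}) = F^{b-a} R + 𝐟^{[b]}`. -/
theorem statement4 (R : Type) [CommRing R] [IsNoetherianRing R]
    (c : ℕ) (f : Fin c → R)
    (hreg : RingTheory.Sequence.IsRegular R (List.ofFn f))
    (a b : ℕ) (ha : 1 ≤ a) (hab : a < b) :
    (Ideal.span (Set.range fun i => f i ^ b)).colon
        (Ideal.span (Set.range fun i => f i ^ a))
      = Ideal.span {(∏ i, f i) ^ (b - a)} ⊔ Ideal.span (Set.range fun i => f i ^ b) :=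
  statement4_general R c f hreg a b hab
end

section
/- Let R be a Noetherian ring and g_1,…,g_t, f_1,…,f_c a regular sequence. Write 𝐠 = (g_1,…,g_t), 𝐟^{[a]} = (f_1^a,…,f_c^a), g = g_1⋯g_t. Then for every a ≥ 1, ((𝐠^{[a]} + 𝐟^{[a]}) : g^{a−1}) = 𝐠 + 𝐟^{[a]}, so multiplication by g^{a−1} induces an injective R-module map R/(𝐠 + 𝐟^{[a]}) → R/(𝐠^{[a]} + 𝐟^{[a]}). -/
open scoped Pointwise
open RingTheory.Sequence Submodule Function

namespace Statement5Aux

universe u v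

variable {R : Type u} [CommRing R]

section Modules

variable {M : Type v} [AddCommGroup M] [Module R M]

lemma mem_smul_top_iff'' (r : R) (x : M) :
    x ∈ (r • ⊤ : Submodule R M) ↔ ∃ y, r • y = x := by
  rw [← SetLike.mem_coe, Submodule.coe_pointwise_smul]
  constructor
  · rintro ⟨y, -, rfl⟩; exact ⟨y, rfl⟩
  · rintro ⟨y, rfl⟩; exact ⟨y, trivial, rfl⟩

lemma isSMulRegular_of_ker (r : R) (h : ∀ x : M, r • x = 0 → x = 0) :
    IsSMulRegular M r := by
  intro x y hxy
  have : r • (x - y) = 0 := by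
    simp only [smul_sub]
    simpa [sub_eq_zero] using hxy
  have := h _ this
  exact sub_eq_zero.mp this

lemma eq_zero_of_smul {r : R} (hr : IsSMulRegular M r) {x : M} (h : r • x = 0) : x = 0 :=
  hr (by simpa using h)

end Modules

section SES

/-- Weak regularity passes from the two ends of a short exact sequence to the middle. -/
lemma isWeaklyRegular_of_exact :
    ∀ (rs : List R) {M' M M'' : Type v}
      [AddCommGroup M'] [Module R M'] [AddCommGroup M] [Module R M]
      [AddCommGroup M''] [Module R M'']
      (f : M' →ₗ[R] M) (p : M →ₗ[R] M''),
      Function.Injective f → Function.Surjective p →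
      (∀ x, p x = 0 ↔ x ∈ LinearMap.range f) →
      IsWeaklyRegular M' rs → IsWeaklyRegular M'' rs → IsWeaklyRegular M rs := by
  intro rs
  induction rs with
  | nil => intros; exact IsWeaklyRegular.nil _ _
  | cons r rs ih =>
    intro M' M M'' _ _ _ _ _ _ f p hf hp hex h' h''
    rw [isWeaklyRegular_cons_iff] at h' h'' ⊢
    obtain ⟨h'r, h'rs⟩ := h'
    obtain ⟨h''r, h''rs⟩ := h''
    have hrM : IsSMulRegular M r := by
      apply isSMulRegular_of_ker
      intro x hx
      have hpx : p x = 0 := by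
        apply eq_zero_of_smul h''r
        rw [← map_smul, hx, map_zero]
      obtain ⟨y, rfl⟩ := (hex x).mp hpx
      have hfy : f (r • y) = 0 := by rw [map_smul, hx]
      have hy : y = 0 := eq_zero_of_smul h'r (hf (by rw [hfy, map_zero]))
      rw [hy, map_zero]
    refine ⟨hrM, ?_⟩
    -- induced maps on QuotSMulTop
    have hfle : (r • ⊤ : Submodule R M') ≤ comap f (r • ⊤ : Submodule R M) := by
      intro x hx
      obtain ⟨y, rfl⟩ := (mem_smul_top_iff'' r x).mp hx
      simp only [mem_comap, map_smul]
      exact (mem_smul_top_iff'' r _).mpr ⟨f y, rfl⟩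
    have hple : (r • ⊤ : Submodule R M) ≤ comap p (r • ⊤ : Submodule R M'') := by
      intro x hx
      obtain ⟨y, rfl⟩ := (mem_smul_top_iff'' r x).mp hx
      simp only [mem_comap, map_smul]
      exact (mem_smul_top_iff'' r _).mpr ⟨p y, rfl⟩
    set fbar : QuotSMulTop r M' →ₗ[R] QuotSMulTop r M := mapQ _ _ f hfle with hfbar_def
    set pbar : QuotSMulTop r M →ₗ[R] QuotSMulTop r M'' := mapQ _ _ p hple with hpbar_def
    have hfbar_apply : ∀ x : M', fbar (Submodule.Quotient.mk x) = Submodule.Quotient.mk (f x) :=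
      fun x => rfl
    have hpbar_apply : ∀ x : M, pbar (Submodule.Quotient.mk x) = Submodule.Quotient.mk (p x) :=
      fun x => rfl
    have hfbar : Function.Injective fbar := by
      rw [← LinearMap.ker_eq_bot, LinearMap.ker_eq_bot']
      intro z hz
      obtain ⟨y, rfl⟩ := Submodule.Quotient.mk_surjective _ z
      rw [hfbar_apply, Submodule.Quotient.mk_eq_zero] at hz
      obtain ⟨m, hm⟩ := (mem_smul_top_iff'' r _).mp hz
      have hpm : p m = 0 := by
        apply eq_zero_of_smul h''r
        rw [← map_smul, hm]
        exact (hex (f y)).mpr ⟨y, rfl⟩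
      obtain ⟨y', rfl⟩ := (hex m).mp hpm
      have : f (r • y') = f y := by rw [map_smul]; exact hm
      have hy : y = r • y' := (hf this).symm
      rw [Submodule.Quotient.mk_eq_zero, hy]
      exact (mem_smul_top_iff'' r _).mpr ⟨y', rfl⟩
    have hpbar : Function.Surjective pbar := by
      intro z
      obtain ⟨x, rfl⟩ := Submodule.Quotient.mk_surjective _ z
      obtain ⟨m, rfl⟩ := hp x
      exact ⟨Submodule.Quotient.mk m, rfl⟩
    have hexbar : ∀ z, pbar z = 0 ↔ z ∈ LinearMap.range fbar := by
      intro z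
      obtain ⟨x, rfl⟩ := Submodule.Quotient.mk_surjective _ z
      rw [hpbar_apply, Submodule.Quotient.mk_eq_zero]
      constructor
      · intro hx
        obtain ⟨m'', hm''⟩ := (mem_smul_top_iff'' r _).mp hx
        obtain ⟨m, rfl⟩ := hp m''
        have : p (x - r • m) = 0 := by
          rw [map_sub, map_smul, sub_eq_zero, hm'']
        obtain ⟨y, hy⟩ := (hex _).mp this
        refine ⟨Submodule.Quotient.mk y, ?_⟩
        rw [hfbar_apply, hy]
        rw [show Submodule.Quotient.mk (p := (r • ⊤ : Submodule R M)) (x - r • m)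
            = Submodule.Quotient.mk x - Submodule.Quotient.mk (r • m) from rfl]
        have : Submodule.Quotient.mk (p := (r • ⊤ : Submodule R M)) (r • m) = 0 := by
          rw [Submodule.Quotient.mk_eq_zero]
          exact (mem_smul_top_iff'' r _).mpr ⟨m, rfl⟩
        rw [this, sub_zero]
      · rintro ⟨w, hw⟩
        obtain ⟨y, rfl⟩ := Submodule.Quotient.mk_surjective _ w
        rw [hfbar_apply] at hw
        have : Submodule.Quotient.mk (p := (r • ⊤ : Submodule R M)) (x - f y) = 0 := by
          rw [show Submodule.Quotient.mk (p := (r • ⊤ : Submodule R M)) (x - f y)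
              = Submodule.Quotient.mk x - Submodule.Quotient.mk (f y) from rfl, hw, sub_self]
        rw [Submodule.Quotient.mk_eq_zero] at this
        obtain ⟨m, hm⟩ := (mem_smul_top_iff'' r _).mp this
        have hx : x = f y + r • m := by rw [hm]; abel
        rw [hx]
        have : p (f y) = 0 := (hex (f y)).mpr ⟨y, rfl⟩
        rw [map_add, map_smul, this, zero_add]
        exact (mem_smul_top_iff'' r _).mpr ⟨p m, rfl⟩
    exact ih fbar pbar hfbar hpbar hexbar h'rs h''rs

end SES

section PowQuot

variable {M : Type v} [AddCommGroup M] [Module R M]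

/-- If `r` is regular on `M` and `rs` is weakly regular on `M/rM`, then `rs` is weakly
regular on `M/rⁿ⁺¹M`. -/
lemma isWeaklyRegular_quot_pow {r : R} (hr : IsSMulRegular M r) {rs : List R}
    (h : IsWeaklyRegular (QuotSMulTop r M) rs) :
    ∀ n : ℕ, IsWeaklyRegular (QuotSMulTop (r ^ (n + 1)) M) rs := by
  intro n
  induction n with
  | zero => rw [zero_add, pow_one]; exact h
  | succ n ihn =>
    -- SES : 0 → M/rM --·r^{n+1}→ M/r^{n+2}M → M/r^{n+1}M → 0
    have hfle : (r • ⊤ : Submodule R M) ≤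
        comap (LinearMap.lsmul R M (r ^ (n + 1))) ((r ^ (n + 2)) • ⊤ : Submodule R M) := by
      intro x hx
      obtain ⟨y, rfl⟩ := (mem_smul_top_iff'' r x).mp hx
      simp only [mem_comap, LinearMap.lsmul_apply]
      refine (mem_smul_top_iff'' _ _).mpr ⟨y, ?_⟩
      rw [smul_smul, ← pow_succ]
    have hple : ((r ^ (n + 2)) • ⊤ : Submodule R M) ≤
        comap (LinearMap.id (M := M)) ((r ^ (n + 1)) • ⊤ : Submodule R M) := by
      intro x hx
      obtain ⟨y, rfl⟩ := (mem_smul_top_iff'' _ x).mp hx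
      simp only [mem_comap, LinearMap.id_apply]
      refine (mem_smul_top_iff'' _ _).mpr ⟨r • y, ?_⟩
      rw [smul_smul, ← pow_succ]
    set f : QuotSMulTop r M →ₗ[R] QuotSMulTop (r ^ (n + 2)) M :=
      mapQ _ _ (LinearMap.lsmul R M (r ^ (n + 1))) hfle with hf_def
    set p : QuotSMulTop (r ^ (n + 2)) M →ₗ[R] QuotSMulTop (r ^ (n + 1)) M :=
      mapQ _ _ LinearMap.id hple with hp_def
    have hf_apply : ∀ x : M, f (Submodule.Quotient.mk x)
        = Submodule.Quotient.mk (r ^ (n + 1) • x) := fun x => rfl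
    have hp_apply : ∀ x : M, p (Submodule.Quotient.mk x) = Submodule.Quotient.mk x :=
      fun x => rfl
    have hfinj : Function.Injective f := by
      rw [← LinearMap.ker_eq_bot, LinearMap.ker_eq_bot']
      intro z hz
      obtain ⟨x, rfl⟩ := Submodule.Quotient.mk_surjective _ z
      rw [hf_apply, Submodule.Quotient.mk_eq_zero] at hz
      obtain ⟨y, hy⟩ := (mem_smul_top_iff'' _ _).mp hz
      have : r ^ (n + 1) • (x - r • y) = 0 := by
        rw [smul_sub, ← hy, smul_smul, ← pow_succ, sub_self]
      have hx : x = r • y := sub_eq_zero.mp (eq_zero_of_smul (hr.pow (n + 1)) this)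
      rw [Submodule.Quotient.mk_eq_zero, hx]
      exact (mem_smul_top_iff'' r _).mpr ⟨y, rfl⟩
    have hpsurj : Function.Surjective p := by
      intro z
      obtain ⟨x, rfl⟩ := Submodule.Quotient.mk_surjective _ z
      exact ⟨Submodule.Quotient.mk x, rfl⟩
    have hexact : ∀ z, p z = 0 ↔ z ∈ LinearMap.range f := by
      intro z
      obtain ⟨x, rfl⟩ := Submodule.Quotient.mk_surjective _ z
      rw [hp_apply, Submodule.Quotient.mk_eq_zero]
      constructor
      · intro hx
        obtain ⟨y, hy⟩ := (mem_smul_top_iff'' _ _).mp hx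
        exact ⟨Submodule.Quotient.mk y, by rw [hf_apply, hy]⟩
      · rintro ⟨w, hw⟩
        obtain ⟨y, rfl⟩ := Submodule.Quotient.mk_surjective _ w
        rw [hf_apply] at hw
        have : Submodule.Quotient.mk (p := ((r ^ (n + 2)) • ⊤ : Submodule R M))
            (x - r ^ (n + 1) • y) = 0 := by
          rw [show Submodule.Quotient.mk (p := ((r ^ (n + 2)) • ⊤ : Submodule R M))
              (x - r ^ (n + 1) • y) = Submodule.Quotient.mk x
                - Submodule.Quotient.mk (r ^ (n + 1) • y) from rfl, hw, sub_self]
        rw [Submodule.Quotient.mk_eq_zero] at this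
        obtain ⟨m, hm⟩ := (mem_smul_top_iff'' _ _).mp this
        refine (mem_smul_top_iff'' _ _).mpr ⟨y + r • m, ?_⟩
        rw [smul_add, smul_smul, ← pow_succ, hm]
        abel
    exact isWeaklyRegular_of_exact rs f p hfinj hpsurj hexact h ihn

end PowQuot

section Powers

/-- Powers of a weakly regular sequence are weakly regular. -/
lemma wr_map_pow {M : Type v} [AddCommGroup M] [Module R M]
    {rs : List R} (h : IsWeaklyRegular M rs) (a : ℕ) (ha : 0 < a) :
    IsWeaklyRegular M (rs.map (· ^ a)) := by
  induction h with
  | nil M => simpa using IsWeaklyRegular.nil R M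
  | cons r rs h1 h2 ih =>
    rw [List.map_cons]
    refine IsWeaklyRegular.cons (h1.pow a) ?_
    obtain ⟨n, rfl⟩ : ∃ n, a = n + 1 := ⟨a - 1, (Nat.succ_pred_eq_of_pos ha).symm⟩
    exact isWeaklyRegular_quot_pow h1 ih n

end Powers

section ColonLemmas

variable {M : Type v} [AddCommGroup M] [Module R M]

/-- Lemma B : if `x :: l` is weakly regular then `x` is regular modulo `(l)M`. -/
lemma smul_mem_ofList_smul :
    ∀ {l : List R} {x : R}, IsWeaklyRegular M (x :: l) →
      ∀ m : M, x • m ∈ (Ideal.ofList l • ⊤ : Submodule R M) →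
        m ∈ (Ideal.ofList l • ⊤ : Submodule R M) := by
  intro l
  induction l using List.reverseRecOn with
  | nil =>
    intro x h m hm
    rw [Ideal.ofList_nil, bot_smul, mem_bot] at hm ⊢
    exact eq_zero_of_smul ((isWeaklyRegular_cons_iff M x []).mp h).1 hm
  | append_singleton l y ih =>
    intro x h m hm
    rw [← List.cons_append] at h
    obtain ⟨hxl, hy⟩ := (isWeaklyRegular_append_iff M (x :: l) [y]).mp h
    rw [isWeaklyRegular_singleton_iff] at hy
    rw [Ideal.ofList_append, Ideal.ofList_singleton, sup_smul,
      ideal_span_singleton_smul] at hm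
    obtain ⟨w, hw, v, hv, hsum⟩ := Submodule.mem_sup.mp hm
    obtain ⟨u, rfl⟩ := (mem_smul_top_iff'' y v).mp hv
    have hu : y • u ∈ (Ideal.ofList (x :: l) • ⊤ : Submodule R M) := by
      have hyu : y • u = x • m - w := by rw [← hsum]; abel
      rw [hyu]
      refine sub_mem ?_ ?_
      · exact Submodule.smul_mem_smul (Ideal.subset_span (List.mem_cons_self (a := x) (l := l)))
          mem_top
      · exact Submodule.smul_mono_left
          (Ideal.span_mono (fun z hz => List.mem_cons_of_mem x hz)) hw
    have hu2 : u ∈ (Ideal.ofList (x :: l) • ⊤ : Submodule R M) := by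
      have : y • (Submodule.Quotient.mk (p := (Ideal.ofList (x :: l) • ⊤ : Submodule R M)) u)
          = 0 := by
        rw [← Submodule.Quotient.mk_smul, Submodule.Quotient.mk_eq_zero]
        exact hu
      have := eq_zero_of_smul hy this
      rwa [Submodule.Quotient.mk_eq_zero] at this
    rw [Ideal.ofList_cons, sup_smul, ideal_span_singleton_smul] at hu2
    obtain ⟨v1, hv1, w1, hw1, hsum2⟩ := Submodule.mem_sup.mp hu2
    obtain ⟨v', rfl⟩ := (mem_smul_top_iff'' x v1).mp hv1
    have key : x • (m - y • v') ∈ (Ideal.ofList l • ⊤ : Submodule R M) := by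
      have hcalc : x • (m - y • v') = w + y • w1 := by
        have h1 : x • m = w + y • u := hsum.symm
        have h2 : u = x • v' + w1 := hsum2.symm
        rw [smul_sub, h1, h2, smul_add, smul_comm y x v']
        abel
      rw [hcalc]
      exact add_mem hw (Submodule.smul_mem _ y hw1)
    have hfin := ih hxl _ key
    rw [Ideal.ofList_append, Ideal.ofList_singleton, sup_smul, ideal_span_singleton_smul]
    refine Submodule.mem_sup.mpr ⟨m - y • v', hfin, y • v',
      Submodule.smul_mem_pointwise_smul v' y ⊤ mem_top, by abel⟩

lemma pow_smul_mem_smul_top {g : R} {J : Ideal R}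
    (hg : ∀ u : M, g • u ∈ (J • ⊤ : Submodule R M) → u ∈ (J • ⊤ : Submodule R M)) :
    ∀ (n : ℕ) (u : M), g ^ n • u ∈ (J • ⊤ : Submodule R M) → u ∈ (J • ⊤ : Submodule R M) := by
  intro n
  induction n with
  | zero => intro u hu; simpa using hu
  | succ n ih =>
    intro u hu
    rw [pow_succ, mul_comm, mul_smul] at hu
    exact ih u (hg _ hu)

/-- Lemma A : the elementary colon-power step. -/
lemma lemA {g : R} {J : Ideal R}
    (hg : ∀ u : M, g • u ∈ (J • ⊤ : Submodule R M) → u ∈ (J • ⊤ : Submodule R M))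
    (n : ℕ) (m : M)
    (hm : g ^ n • m ∈ ((Ideal.span {g ^ (n + 1)} ⊔ J) • ⊤ : Submodule R M)) :
    m ∈ ((Ideal.span {g} ⊔ J) • ⊤ : Submodule R M) := by
  rw [sup_smul, ideal_span_singleton_smul] at hm
  obtain ⟨v, hv, w, hw, hsum⟩ := Submodule.mem_sup.mp hm
  obtain ⟨u, rfl⟩ := (mem_smul_top_iff'' _ v).mp hv
  have hkey : g ^ n • (m - g • u) ∈ (J • ⊤ : Submodule R M) := by
    have : g ^ n • (m - g • u) = w := by
      rw [smul_sub, smul_smul, ← pow_succ, ← hsum]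
      abel
    rw [this]; exact hw
  have hmgu := pow_smul_mem_smul_top hg n _ hkey
  rw [sup_smul, ideal_span_singleton_smul]
  exact Submodule.mem_sup.mpr ⟨g • u, Submodule.smul_mem_pointwise_smul u g ⊤ mem_top,
    m - g • u, hmgu, by abel⟩

end ColonLemmas

/-- The master lemma. -/
lemma master (n : ℕ) :
    ∀ (gs : List R) {M : Type v} [AddCommGroup M] [Module R M] (fs : List R),
      IsWeaklyRegular M (gs ++ fs) → ∀ m : M,
      gs.prod ^ n • m ∈
        ((Ideal.ofList (gs.map (· ^ (n + 1))) ⊔ Ideal.ofList (fs.map (· ^ (n + 1)))) • ⊤ :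
          Submodule R M) →
      m ∈ ((Ideal.ofList gs ⊔ Ideal.ofList (fs.map (· ^ (n + 1)))) • ⊤ : Submodule R M) := by
  intro gs
  induction gs with
  | nil =>
    intro M _ _ fs h m hm
    simpa using hm
  | cons g gs ih =>
    intro M _ _ fs h m hm
    rw [List.cons_append] at h
    obtain ⟨hgreg, htail⟩ := (isWeaklyRegular_cons_iff M g (gs ++ fs)).mp h
    set J : Ideal R := Ideal.ofList ((gs ++ fs).map (· ^ (n + 1))) with hJ
    have hJsplit : J = Ideal.ofList (gs.map (· ^ (n + 1)))
        ⊔ Ideal.ofList (fs.map (· ^ (n + 1))) := by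
      rw [hJ, List.map_append, Ideal.ofList_append]
    -- g is regular modulo JM
    have hpowseq : IsWeaklyRegular M (g :: (gs ++ fs).map (· ^ (n + 1))) := by
      rw [isWeaklyRegular_cons_iff]
      exact ⟨hgreg, wr_map_pow htail (n + 1) (Nat.succ_pos n)⟩
    have hg : ∀ u : M, g • u ∈ (J • ⊤ : Submodule R M) → u ∈ (J • ⊤ : Submodule R M) :=
      fun u hu => smul_mem_ofList_smul hpowseq u hu
    -- reshape hm and apply Lemma A
    have hm' : g ^ n • (gs.prod ^ n • m) ∈
        ((Ideal.span {g ^ (n + 1)} ⊔ J) • ⊤ : Submodule R M) := by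
      rw [hJsplit, ← sup_assoc]
      rw [List.prod_cons, mul_pow, mul_smul] at hm
      rw [List.map_cons, Ideal.ofList_cons] at hm
      exact hm
    have hstep := lemA hg n _ hm'
    -- pass to the quotient M / gM
    rw [sup_smul, ideal_span_singleton_smul] at hstep
    obtain ⟨v, hv, w, hw, hsum⟩ := Submodule.mem_sup.mp hstep
    obtain ⟨u, rfl⟩ := (mem_smul_top_iff'' g v).mp hv
    set N : Submodule R M := (g • ⊤ : Submodule R M) with hN
    have hmapJ : ∀ (K : Ideal R), (K • ⊤ : Submodule R (QuotSMulTop g M))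
        = Submodule.map N.mkQ (K • ⊤ : Submodule R M) := by
      intro K
      rw [map_smul'', Submodule.map_top, range_mkQ]
    have himg : gs.prod ^ n • (Submodule.Quotient.mk (p := N) m) ∈
        ((Ideal.ofList (gs.map (· ^ (n + 1))) ⊔ Ideal.ofList (fs.map (· ^ (n + 1)))) • ⊤ :
          Submodule R (QuotSMulTop g M)) := by
      rw [← hJsplit, hmapJ]
      have h1 : gs.prod ^ n • (Submodule.Quotient.mk (p := N) m)
          = Submodule.Quotient.mk (p := N) (gs.prod ^ n • m) := rfl
      have h2 : Submodule.Quotient.mk (p := N) (gs.prod ^ n • m)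
          = Submodule.Quotient.mk (p := N) w := by
        rw [← hsum]
        have : Submodule.Quotient.mk (p := N) (g • u) = 0 := by
          rw [Submodule.Quotient.mk_eq_zero]
          exact Submodule.smul_mem_pointwise_smul u g ⊤ mem_top
        rw [show Submodule.Quotient.mk (p := N) (g • u + w)
            = Submodule.Quotient.mk (p := N) (g • u) + Submodule.Quotient.mk (p := N) w
          from rfl, this, zero_add]
      rw [h1, h2]
      exact Submodule.mem_map_of_mem hw
    have hquot := ih (M := QuotSMulTop g M) fs htail _ himg
    -- pull back
    rw [hmapJ] at hquot
    obtain ⟨m', hm', hmm'⟩ := hquot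
    have : m - m' ∈ N := by
      rw [← Submodule.Quotient.mk_eq_zero (p := N)]
      rw [show Submodule.Quotient.mk (p := N) (m - m')
          = Submodule.Quotient.mk (p := N) m - Submodule.Quotient.mk (p := N) m' from rfl]
      rw [show Submodule.Quotient.mk (p := N) m' = N.mkQ m' from rfl, hmm', sub_self]
    -- conclude
    rw [Ideal.ofList_cons, sup_assoc, sup_smul, ideal_span_singleton_smul]
    refine Submodule.mem_sup.mpr ⟨m - m', this, m', hm', by abel⟩

lemma ofList_ofFn {k : ℕ} (h : Fin k → R) :
    Ideal.ofList (List.ofFn h) = Ideal.span (Set.range h) :=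
  congrArg Ideal.span (Set.ext fun x => List.mem_ofFn (f := h) (a := x))

end Statement5Aux

open Statement5Aux RingTheory.Sequence Submodule in
/-- Let `R` be Noetherian and `g 0, …, g (t-1), f 0, …, f (c-1)` a regular
sequence; write `𝐠 = (g 0, …, g (t-1))`, `𝐡^{[a]}` for ideals of `a`-th powers, and
`G = ∏ g i`.  Then for every `a ≥ 1`,
`((𝐠^{[a]} + 𝐟^{[a]}) : G^{a-1}) = 𝐠 + 𝐟^{[a]}`; consequently multiplication by `G^{a-1}`
induces an injective `R`-module map `R/(𝐠 + 𝐟^{[a]}) → R/(𝐠^{[a]} + 𝐟^{[a]})`. -/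
theorem statement5 (R : Type) [CommRing R] [IsNoetherianRing R]
    (t c : ℕ) (g : Fin t → R) (f : Fin c → R)
    (hreg : RingTheory.Sequence.IsRegular R (List.ofFn g ++ List.ofFn f))
    (a : ℕ) (ha : 1 ≤ a) :
    ((Ideal.span (Set.range fun i => g i ^ a) ⊔ Ideal.span (Set.range fun i => f i ^ a)).colon
        (Ideal.span {(∏ i, g i) ^ (a - 1)})
      = Ideal.span (Set.range g) ⊔ Ideal.span (Set.range fun i => f i ^ a))
    ∧ ∀ ψ : (R ⧸ (Ideal.span (Set.range g) ⊔ Ideal.span (Set.range fun i => f i ^ a))) →ₗ[R]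
          (R ⧸ (Ideal.span (Set.range fun i => g i ^ a) ⊔
                  Ideal.span (Set.range fun i => f i ^ a))),
        (∀ r : R, ψ (Ideal.Quotient.mk _ r) = Ideal.Quotient.mk _ ((∏ i, g i) ^ (a - 1) * r)) →
        Function.Injective ψ := by
  obtain ⟨n, rfl⟩ : ∃ n, a = n + 1 := ⟨a - 1, (Nat.succ_pred_eq_of_pos ha).symm⟩
  have hsub : n + 1 - 1 = n := by omega
  set K : Ideal R := Ideal.span (Set.range fun i => g i ^ (n + 1))
    ⊔ Ideal.span (Set.range fun i => f i ^ (n + 1)) with hK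
  set L : Ideal R := Ideal.span (Set.range g)
    ⊔ Ideal.span (Set.range fun i => f i ^ (n + 1)) with hL
  set G : R := ∏ i, g i with hG
  -- the key colon inclusion from the master lemma
  have hwr : IsWeaklyRegular R (List.ofFn g ++ List.ofFn f) := hreg.toIsWeaklyRegular
  have hmaster : ∀ r : R, r * G ^ n ∈ K → r ∈ L := by
    intro r hr
    have hsmul : (List.ofFn g).prod ^ n • r ∈
        ((Ideal.ofList ((List.ofFn g).map (· ^ (n + 1)))
          ⊔ Ideal.ofList ((List.ofFn f).map (· ^ (n + 1)))) • ⊤ : Submodule R R) := by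
      rw [List.map_ofFn, List.map_ofFn, ofList_ofFn, ofList_ofFn]
      rw [Ideal.smul_eq_mul, Ideal.mul_top]
      rw [List.prod_ofFn, smul_eq_mul, mul_comm]
      exact hr
    have := master n (List.ofFn g) (List.ofFn f) hwr r hsmul
    rw [List.map_ofFn, ofList_ofFn, ofList_ofFn, Ideal.smul_eq_mul, Ideal.mul_top] at this
    exact this
  have hGpow : ∀ i : Fin t, g i * G ^ n ∈ K := by
    intro i
    have h1 : G ^ n = ∏ j, g j ^ n := by rw [hG, Finset.prod_pow]
    have h2 : (∏ j, g j ^ n) = g i ^ n * ∏ j ∈ Finset.univ.erase i, g j ^ n :=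
      (Finset.mul_prod_erase Finset.univ (fun j => g j ^ n) (Finset.mem_univ i)).symm
    rw [h1, h2, ← mul_assoc, ← pow_succ']
    refine Ideal.mem_sup_left ?_
    exact Ideal.mul_mem_right _ _ (Ideal.subset_span ⟨i, rfl⟩)
  have hcolon : K.colon (Ideal.span {G ^ n}) = L := by
    apply le_antisymm
    · intro r hr
      rw [Ideal.mem_colon_span_singleton] at hr
      exact hmaster r hr
    · refine sup_le ?_ ?_
      · rw [Ideal.span_le]
        rintro x ⟨i, rfl⟩
        rw [SetLike.mem_coe, Ideal.mem_colon_span_singleton]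
        exact hGpow i
      · rw [Ideal.span_le]
        rintro x ⟨j, rfl⟩
        rw [SetLike.mem_coe, Ideal.mem_colon_span_singleton]
        refine Ideal.mem_sup_right ?_
        exact Ideal.mul_mem_right _ _ (Ideal.subset_span ⟨j, rfl⟩)
  rw [hsub]
  refine ⟨hcolon, ?_⟩
  intro ψ hψ
  intro x y hxy
  obtain ⟨r, rfl⟩ := Ideal.Quotient.mk_surjective x
  obtain ⟨s, rfl⟩ := Ideal.Quotient.mk_surjective y
  rw [hψ, hψ] at hxy
  have hdiff : G ^ n * (r - s) ∈ K := by
    have := (Ideal.Quotient.eq (I := K)).mp hxy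
    rw [← mul_sub] at this
    exact this
  have : r - s ∈ L := by
    apply hmaster
    rw [mul_comm]
    exact hdiff
  exact (Ideal.Quotient.eq (I := L)).mpr this
end

section
/- Let R be a Noetherian ring and g_1,…,g_t, f_1,…,f_c a regular sequence, g = g_1⋯g_t. Then for every a ≥ 1 the image of the multiplication-by-g^{a−1} map R/(𝐠 + 𝐟^{[a]}) → R/(𝐠^{[a]} + 𝐟^{[a]}) is exactly the annihilator of the ideal 𝐠 in R/(𝐠^{[a]} + 𝐟^{[a]}); equivalently, ((𝐠^{[a]} + 𝐟^{[a]}) : 𝐠) = g^{a−1}R + 𝐠^{[a]} + 𝐟^{[a]}. -/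
open RingTheory.Sequence Submodule Function Pointwise

variable {R : Type} [CommRing R]


lemma mem_smulTop_iff {M : Type} [AddCommGroup M] [Module R M] (r : R) (m : M) :
    m ∈ r • (⊤ : Submodule R M) ↔ ∃ n : M, r • n = m := by
  constructor
  · intro h
    obtain ⟨n, -, rfl⟩ := Submodule.mem_map.mp h
    exact ⟨n, rfl⟩
  · rintro ⟨n, rfl⟩
    exact Submodule.smul_mem_pointwise_smul n r ⊤ trivial

lemma wr_of_exact : ∀ (l : List R) (A B C : Type) [AddCommGroup A] [AddCommGroup B]
    [AddCommGroup C] [Module R A] [Module R B] [Module R C]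
    (f : A →ₗ[R] B) (g : B →ₗ[R] C),
    Injective f → Surjective g → Exact f g →
    IsWeaklyRegular A l → IsWeaklyRegular C l → IsWeaklyRegular B l := by
  intro l
  induction l with
  | nil => intros; exact IsWeaklyRegular.nil R _
  | cons r l ih =>
    intro A B C _ _ _ _ _ _ f g hf hg hfg hA hC
    rw [isWeaklyRegular_cons_iff] at hA hC ⊢
    obtain ⟨hrA, hA⟩ := hA
    obtain ⟨hrC, hC⟩ := hC
    have hrB : IsSMulRegular B r := by
      have : ∀ b : B, r • b = 0 → b = 0 := by
        intro b hb
        have hgb : g b = 0 := hrC (show r • g b = r • 0 by rw [← map_smul, hb, map_zero, smul_zero])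
        obtain ⟨p, rfl⟩ := (hfg _).mp hgb
        have hp : r • p = 0 := hf (by rw [map_smul, hb, map_zero])
        have : p = 0 := hrA (show r • p = r • 0 by rw [hp, smul_zero])
        rw [this, map_zero]
      intro b b' hb
      have hb' : r • b = r • b' := hb
      have := this (b - b') (by rw [smul_sub, hb', sub_self])
      exact sub_eq_zero.mp this
    refine ⟨hrB, ?_⟩
    -- quotient maps
    have hf' : Injective (QuotSMulTop.map r f) := by
      rw [injective_iff_map_eq_zero]
      intro ab hab
      obtain ⟨a, rfl⟩ := Submodule.Quotient.mk_surjective _ ab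
      rw [QuotSMulTop.map_apply_mk, Submodule.Quotient.mk_eq_zero] at hab
      obtain ⟨b, hb⟩ := (mem_smulTop_iff r _).mp hab
      have : g b = 0 := by
        apply hrC
        show r • g b = r • 0
        rw [smul_zero, ← map_smul, hb, hfg.apply_apply_eq_zero]
      obtain ⟨a', ha'⟩ := (hfg _).mp this
      rw [Submodule.Quotient.mk_eq_zero]
      refine (mem_smulTop_iff r _).mpr ⟨a', hf ?_⟩
      rw [map_smul, ha', hb]
    exact ih _ _ _ _ _ hf' (QuotSMulTop.map_surjective r hg)
      (QuotSMulTop.map_exact r hfg hg) hA hC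

lemma wr_quot_pow {M : Type} [AddCommGroup M] [Module R M] {r : R} (hr : IsSMulRegular M r)
    {l : List R} (hl : IsWeaklyRegular (QuotSMulTop r M) l) :
    ∀ k, 1 ≤ k → IsWeaklyRegular (M ⧸ (r ^ k • (⊤ : Submodule R M))) l := by
  intro k
  induction k with
  | zero => omega
  | succ k ih =>
    intro _
    by_cases hk : k = 0
    · subst hk
      rw [pow_one]
      exact hl
    · have hA := ih (by omega)
      have hle1 : r ^ k • (⊤ : Submodule R M) ≤
          Submodule.comap (LinearMap.lsmul R M r) (r ^ (k+1) • (⊤ : Submodule R M)) := by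
        intro m hm
        obtain ⟨n, rfl⟩ := (mem_smulTop_iff _ _).mp hm
        rw [Submodule.mem_comap]
        show r • (r ^ k • n) ∈ r ^ (k+1) • (⊤ : Submodule R M)
        rw [smul_smul, ← pow_succ']
        exact (mem_smulTop_iff _ _).mpr ⟨n, rfl⟩
      have hle2 : r ^ (k+1) • (⊤ : Submodule R M) ≤ Submodule.comap (LinearMap.id) (r • (⊤ : Submodule R M)) := by
        intro m hm
        obtain ⟨n, rfl⟩ := (mem_smulTop_iff _ _).mp hm
        rw [Submodule.mem_comap]
        show r ^ (k+1) • n ∈ r • (⊤ : Submodule R M)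
        rw [pow_succ', mul_smul]
        exact (mem_smulTop_iff _ _).mpr ⟨_, rfl⟩
      set f := Submodule.mapQ _ _ (LinearMap.lsmul R M r) hle1 with hfdef
      set g := Submodule.mapQ _ _ (LinearMap.id) hle2 with hgdef
      have hfmk : ∀ m : M, f (Submodule.Quotient.mk m) = Submodule.Quotient.mk (r • m) :=
        fun m => rfl
      have hgmk : ∀ m : M, g (Submodule.Quotient.mk m) =
          (Submodule.Quotient.mk m : QuotSMulTop r M) := fun m => rfl
      have hf : Injective f := by
        rw [injective_iff_map_eq_zero]
        intro x hx
        obtain ⟨m, rfl⟩ := Submodule.Quotient.mk_surjective _ x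
        rw [hfmk, Submodule.Quotient.mk_eq_zero] at hx
        obtain ⟨n, hn⟩ := (mem_smulTop_iff _ _).mp hx
        rw [pow_succ', mul_smul] at hn
        have : m = r ^ k • n := hr hn.symm
        rw [Submodule.Quotient.mk_eq_zero, this]
        exact (mem_smulTop_iff _ _).mpr ⟨n, rfl⟩
      have hg : Surjective g := by
        intro x
        obtain ⟨m, rfl⟩ := Submodule.Quotient.mk_surjective _ x
        exact ⟨Submodule.Quotient.mk m, hgmk m⟩
      have hfg : Exact f g := by
        intro x
        obtain ⟨m, rfl⟩ := Submodule.Quotient.mk_surjective _ x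
        rw [hgmk, Submodule.Quotient.mk_eq_zero]
        constructor
        · intro hm
          obtain ⟨n, rfl⟩ := (mem_smulTop_iff _ _).mp hm
          exact ⟨Submodule.Quotient.mk n, hfmk n⟩
        · rintro ⟨y, hy⟩
          obtain ⟨n, rfl⟩ := Submodule.Quotient.mk_surjective _ y
          rw [hfmk] at hy
          have : Submodule.Quotient.mk (p := r ^ (k+1) • (⊤ : Submodule R M)) (m - r • n)
              = 0 := by
            rw [Submodule.Quotient.mk_sub, ← hy, sub_self]
          rw [Submodule.Quotient.mk_eq_zero] at this
          obtain ⟨u, hu⟩ := (mem_smulTop_iff _ _).mp this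
          have : m = r • (r ^ k • u + n) := by
            rw [smul_add, smul_smul, ← pow_succ', hu]; abel
          rw [this]
          exact (mem_smulTop_iff _ _).mpr ⟨_, rfl⟩
      exact wr_of_exact l _ _ _ f g hf hg hfg hA hl

lemma wr_pow : ∀ (p : List (R × ℕ)) (M : Type) [AddCommGroup M] [Module R M],
    IsWeaklyRegular M (p.map Prod.fst) → (∀ q ∈ p, 1 ≤ q.2) →
    IsWeaklyRegular M (p.map fun q => q.1 ^ q.2) := by
  intro p
  induction p with
  | nil => intro M _ _ _ _; exact IsWeaklyRegular.nil R M
  | cons q p ih =>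
    intro M _ _ h hpos
    rw [List.map_cons, isWeaklyRegular_cons_iff] at h ⊢
    obtain ⟨h1, h2⟩ := h
    refine ⟨h1.pow _, ?_⟩
    exact ih _ (wr_quot_pow h1 h2 q.2 (hpos q List.mem_cons_self))
      (fun q' hq' => hpos _ (List.mem_cons_of_mem _ hq'))

lemma wr_perm_pow [IsLocalRing R] {M : Type} [AddCommGroup M] [Module R M] [IsNoetherian R M]
    {l : List R} (h : IsWeaklyRegular M l) (hm : ∀ r ∈ l, r ∈ IsLocalRing.maximalIdeal R)
    (p : List (R × ℕ)) (hperm : List.Perm (p.map Prod.fst) l) (hpos : ∀ q ∈ p, 1 ≤ q.2) :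
    IsWeaklyRegular M (p.map fun q => q.1 ^ q.2) :=
  wr_pow p M
    (IsLocalRing.isWeaklyRegular_of_perm_of_subset_maximalIdeal h hperm.symm hm) hpos

lemma key_colon : ∀ (x : List R) (M : Type) [AddCommGroup M] [Module R M],
    (∀ p : List (R × ℕ), List.Perm (p.map Prod.fst) x → (∀ q ∈ p, 1 ≤ q.2) →
      IsWeaklyRegular M (p.map fun q => q.1 ^ q.2)) →
    ∀ (a : ℕ), 1 ≤ a → ∀ z : M,
    (∀ r ∈ x, r • z ∈ (Ideal.ofList (x.map (· ^ a)) • ⊤ : Submodule R M)) →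
    z ∈ Ideal.span {x.prod ^ (a - 1)} • (⊤ : Submodule R M) ⊔
      Ideal.ofList (x.map (· ^ a)) • ⊤ := by
  intro x
  induction x with
  | nil =>
    intro M _ _ _ a _ z _
    refine Submodule.mem_sup_left ?_
    rw [List.prod_nil, one_pow, Ideal.span_singleton_one, top_smul]
    trivial
  | cons r xs ih =>
    intro M _ _ hH a ha z hz
    by_cases ha1 : a = 1
    · subst ha1
      refine Submodule.mem_sup_left ?_
      rw [Nat.sub_self, pow_zero, Ideal.span_singleton_one, top_smul]
      trivial
    have hane : a - 1 + 1 = a := by omega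
    have hpow1 : r ^ (a - 1) * r = r ^ a := by rw [← pow_succ, hane]
    have hpow2 : r * r ^ (a - 1) = r ^ a := by rw [← pow_succ', hane]
    set Q' : Ideal R := Ideal.ofList (xs.map (· ^ a)) with hQ'
    have hQa : Ideal.ofList ((r :: xs).map (· ^ a)) = Ideal.span {r ^ a} ⊔ Q' := by
      rw [List.map_cons, Ideal.ofList_cons]
    -- r is regular on M / Q'M
    have hreg1 : IsSMulRegular (M ⧸ (Q' • ⊤ : Submodule R M)) r := by
      have h0 := hH ((xs.map (fun s => (s, a))) ++ [(r, 1)])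
        (by rw [List.map_append, List.map_map]
            simp only [Function.comp_def, List.map_cons, List.map_nil, List.map_id']
            exact List.perm_append_singleton r xs)
        (by intro q hq
            rcases List.mem_append.mp hq with h | h
            · obtain ⟨s, -, rfl⟩ := List.mem_map.mp h; exact ha
            · rw [List.mem_singleton] at h; subst h; exact le_refl 1)
      rw [List.map_append, List.map_map] at h0
      simp only [Function.comp_def, List.map_cons, List.map_nil, pow_one] at h0
      rw [isWeaklyRegular_append_iff] at h0
      have h1 := h0.2
      rw [isWeaklyRegular_singleton_iff] at h1
      exact h1
    have hregpow : IsSMulRegular (M ⧸ (Q' • ⊤ : Submodule R M)) (r ^ (a - 1)) :=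
      hreg1.pow _
    -- membership helpers
    have hmodreg : ∀ (c : R), IsSMulRegular (M ⧸ (Q' • ⊤ : Submodule R M)) c →
        ∀ w : M, c • w ∈ (Q' • ⊤ : Submodule R M) → w ∈ (Q' • ⊤ : Submodule R M) := by
      intro c hc w hw
      rw [← Submodule.Quotient.mk_eq_zero]
      apply hc
      show c • Submodule.Quotient.mk w = c • (0 : M ⧸ (Q' • ⊤ : Submodule R M))
      rw [smul_zero, ← Submodule.Quotient.mk_smul, Submodule.Quotient.mk_eq_zero]
      exact hw
    -- Step 1 : write z = r^(a-1) • m + (element of Q'M)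
    have hz_r := hz r List.mem_cons_self
    rw [hQa, sup_smul] at hz_r
    obtain ⟨u, hu, v, hv, huv⟩ := Submodule.mem_sup.mp hz_r
    rw [ideal_span_singleton_smul] at hu
    obtain ⟨m, rfl⟩ := (mem_smulTop_iff _ _).mp hu
    have h2 : z - r ^ (a - 1) • m ∈ (Q' • ⊤ : Submodule R M) := by
      apply hmodreg r hreg1
      have : r • (z - r ^ (a - 1) • m) = v := by
        rw [smul_sub, smul_smul, hpow2, ← huv]; abel
      rw [this]; exact hv
    -- Step 2 : for s ∈ xs, s • m ∈ Q'M + rM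
    have h3 : ∀ s ∈ xs, s • (Submodule.Quotient.mk m : QuotSMulTop r M) ∈
        (Q' • ⊤ : Submodule R (QuotSMulTop r M)) := by
      intro s hs
      have hsz := hz s (List.mem_cons_of_mem r hs)
      rw [hQa, sup_smul] at hsz
      have h4 : r ^ (a - 1) • (s • m) ∈
          Ideal.span {r ^ a} • (⊤ : Submodule R M) ⊔ Q' • ⊤ := by
        have heq : r ^ (a - 1) • (s • m) = s • z - s • (z - r ^ (a - 1) • m) := by
          rw [smul_sub, smul_comm s (r ^ (a-1)) m]; abel
        rw [heq]
        exact Submodule.sub_mem _ hsz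
          (Submodule.mem_sup_right (Submodule.smul_mem _ s h2))
      obtain ⟨u', hu', v', hv', huv'⟩ := Submodule.mem_sup.mp h4
      rw [ideal_span_singleton_smul] at hu'
      obtain ⟨w, rfl⟩ := (mem_smulTop_iff _ _).mp hu'
      have h6 : s • m - r • w ∈ (Q' • ⊤ : Submodule R M) := by
        apply hmodreg _ hregpow
        have : r ^ (a - 1) • (s • m - r • w) = v' := by
          rw [smul_sub, ← huv', smul_smul, hpow1]; abel
        rw [this]; exact hv'
      have hmapmem : (Submodule.Quotient.mk (s • m - r • w) : QuotSMulTop r M) ∈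
          (Q' • ⊤ : Submodule R (QuotSMulTop r M)) := by
        have := Submodule.mem_map_of_mem (f := (r • (⊤ : Submodule R M)).mkQ) h6
        rwa [Submodule.map_smul'', Submodule.map_top, Submodule.range_mkQ] at this
      have hrw : (Submodule.Quotient.mk (r • w) : QuotSMulTop r M) = 0 := by
        rw [Submodule.Quotient.mk_eq_zero]
        exact (mem_smulTop_iff _ _).mpr ⟨w, rfl⟩
      have : s • (Submodule.Quotient.mk m : QuotSMulTop r M) =
          Submodule.Quotient.mk (s • m - r • w) := by
        rw [← Submodule.Quotient.mk_smul]
        rw [show s • m - r • w = s • m + (-(r • w)) by abel]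
        rw [Submodule.Quotient.mk_add, Submodule.Quotient.mk_neg, hrw, neg_zero, add_zero]
      rw [this]
      exact hmapmem
    -- hypothesis for induction on QuotSMulTop r M
    have hH' : ∀ p : List (R × ℕ), List.Perm (p.map Prod.fst) xs → (∀ q ∈ p, 1 ≤ q.2) →
        IsWeaklyRegular (QuotSMulTop r M) (p.map fun q => q.1 ^ q.2) := by
      intro p hperm hpos
      have h0 := hH ((r, 1) :: p) (by simpa using hperm.cons r)
        (by intro q hq
            rcases List.mem_cons.mp hq with h | h
            · subst h; omega
            · exact hpos q h)
      rw [List.map_cons, pow_one, isWeaklyRegular_cons_iff] at h0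
      exact h0.2
    have hIH := ih (QuotSMulTop r M) hH' a ha (Submodule.Quotient.mk m) h3
    -- pull back along mkQ
    have hpull : m ∈ Ideal.span {xs.prod ^ (a - 1)} • (⊤ : Submodule R M) ⊔ Q' • ⊤ ⊔
        r • ⊤ := by
      have hmapeq : Submodule.map (r • (⊤ : Submodule R M)).mkQ
          (Ideal.span {xs.prod ^ (a - 1)} • (⊤ : Submodule R M) ⊔ Q' • ⊤) =
          Ideal.span {xs.prod ^ (a - 1)} • (⊤ : Submodule R (QuotSMulTop r M)) ⊔ Q' • ⊤ := by
        rw [Submodule.map_sup, Submodule.map_smul'', Submodule.map_smul'',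
          Submodule.map_top, Submodule.range_mkQ]
      have : m ∈ Submodule.comap (r • (⊤ : Submodule R M)).mkQ
          (Ideal.span {xs.prod ^ (a - 1)} • (⊤ : Submodule R (QuotSMulTop r M)) ⊔ Q' • ⊤) := by
        rw [Submodule.mem_comap]
        exact hIH
      rw [← hmapeq, Submodule.comap_map_eq, Submodule.ker_mkQ] at this
      exact this
    -- final assembly
    rw [Submodule.mem_sup] at hpull
    obtain ⟨y, hy, γ, hγ, hmy⟩ := hpull
    rw [Submodule.mem_sup] at hy
    obtain ⟨α, hα, β, hβ, hyy⟩ := hy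
    rw [ideal_span_singleton_smul] at hα
    obtain ⟨n₁, rfl⟩ := (mem_smulTop_iff _ _).mp hα
    obtain ⟨n₂, rfl⟩ := (mem_smulTop_iff _ _).mp hγ
    have hm : m = xs.prod ^ (a - 1) • n₁ + β + r • n₂ := by
      rw [← hmy, ← hyy]
    have hzeq : z = r ^ (a - 1) • (xs.prod ^ (a - 1) • n₁) + r ^ (a - 1) • β +
        r ^ (a - 1) • (r • n₂) + (z - r ^ (a - 1) • m) := by
      rw [← smul_add, ← smul_add, ← hm]
      abel
    rw [hzeq]
    refine Submodule.add_mem _ (Submodule.add_mem _ (Submodule.add_mem _ ?_ ?_) ?_) ?_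
    · refine Submodule.mem_sup_left ?_
      rw [ideal_span_singleton_smul]
      refine (mem_smulTop_iff _ _).mpr ⟨n₁, ?_⟩
      rw [smul_smul, List.prod_cons, mul_pow]
    · refine Submodule.mem_sup_right ?_
      rw [hQa, sup_smul]
      exact Submodule.mem_sup_right (Submodule.smul_mem _ _ hβ)
    · refine Submodule.mem_sup_right ?_
      rw [hQa, sup_smul]
      refine Submodule.mem_sup_left ?_
      rw [ideal_span_singleton_smul]
      exact (mem_smulTop_iff _ _).mpr ⟨n₂, by rw [smul_smul, hpow1]⟩
    · refine Submodule.mem_sup_right ?_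
      rw [hQa, sup_smul]
      exact Submodule.mem_sup_right h2

lemma smulTop_ideal_eq (J : Ideal R) : (J • (⊤ : Submodule R R)) = J := by
  rw [smul_eq_mul, Ideal.mul_top]

lemma local_colon [IsLocalRing R] [IsNoetherianRing R] (gs fs : List R)
    (h : IsWeaklyRegular R (gs ++ fs))
    (hm : ∀ r ∈ gs ++ fs, r ∈ IsLocalRing.maximalIdeal R)
    (a : ℕ) (ha : 1 ≤ a) (z : R)
    (hz : ∀ r ∈ gs, r * z ∈ Ideal.ofList (gs.map (· ^ a)) ⊔ Ideal.ofList (fs.map (· ^ a))) :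
    z ∈ Ideal.span {gs.prod ^ (a - 1)} ⊔ Ideal.ofList (gs.map (· ^ a)) ⊔
      Ideal.ofList (fs.map (· ^ a)) := by
  have hnoeth : IsNoetherian R R := by rwa [← isNoetherianRing_iff]
  set F : Ideal R := Ideal.ofList (fs.map (· ^ a)) with hF
  set GA : Ideal R := Ideal.ofList (gs.map (· ^ a)) with hGA
  set M := R ⧸ (F • ⊤ : Submodule R R) with hM
  -- the hypothesis for key_colon
  have hH : ∀ p : List (R × ℕ), List.Perm (p.map Prod.fst) gs → (∀ q ∈ p, 1 ≤ q.2) →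
      IsWeaklyRegular M (p.map fun q => q.1 ^ q.2) := by
    intro p hperm hpos
    have hwr := wr_perm_pow (M := R) h hm ((fs.map (fun s => (s, a))) ++ p)
      (by rw [List.map_append, List.map_map]
          simp only [Function.comp_def, List.map_id']
          exact ((hperm.append_left fs).trans List.perm_append_comm : _)
          )
      (by intro q hq
          rcases List.mem_append.mp hq with hh | hh
          · obtain ⟨s, -, rfl⟩ := List.mem_map.mp hh; exact ha
          · exact hpos q hh)
    rw [List.map_append, List.map_map] at hwr
    simp only [Function.comp_def] at hwr
    rw [isWeaklyRegular_append_iff] at hwr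
    exact hwr.2
  -- membership hypothesis in M
  have hzM : ∀ r ∈ gs, r • (Submodule.Quotient.mk z : M) ∈
      (GA • ⊤ : Submodule R M) := by
    intro r hr
    have h1 := hz r hr
    rw [Submodule.mem_sup] at h1
    obtain ⟨q₁, hq₁, q₂, hq₂, hq⟩ := h1
    have hmk : r • (Submodule.Quotient.mk z : M) = Submodule.Quotient.mk (r * z) :=
      (Submodule.Quotient.mk_smul _ r z).symm
    rw [hmk, ← hq, Submodule.Quotient.mk_add,
      show (Submodule.Quotient.mk q₂ : M) = 0 by
        rw [Submodule.Quotient.mk_eq_zero, smulTop_ideal_eq]; exact hq₂,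
      add_zero]
    have := Submodule.mem_map_of_mem (f := (F • (⊤ : Submodule R R)).mkQ)
      (show q₁ ∈ (GA • ⊤ : Submodule R R) by rw [smulTop_ideal_eq]; exact hq₁)
    rwa [Submodule.map_smul'', Submodule.map_top, Submodule.range_mkQ] at this
  have hkey := key_colon gs M hH a ha (Submodule.Quotient.mk z) hzM
  -- pull back
  have hmapeq : Submodule.map (F • (⊤ : Submodule R R)).mkQ
      (Ideal.span {gs.prod ^ (a - 1)} • (⊤ : Submodule R R) ⊔ GA • ⊤) =
      Ideal.span {gs.prod ^ (a - 1)} • (⊤ : Submodule R M) ⊔ GA • ⊤ := by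
    rw [Submodule.map_sup, Submodule.map_smul'', Submodule.map_smul'',
      Submodule.map_top, Submodule.range_mkQ]
  have hmem : z ∈ Ideal.span {gs.prod ^ (a - 1)} • (⊤ : Submodule R R) ⊔ GA • ⊤ ⊔
      F • ⊤ := by
    have : z ∈ Submodule.comap (F • (⊤ : Submodule R R)).mkQ
        (Ideal.span {gs.prod ^ (a - 1)} • (⊤ : Submodule R M) ⊔ GA • ⊤) := by
      rw [Submodule.mem_comap]; exact hkey
    rw [← hmapeq, Submodule.comap_map_eq, Submodule.ker_mkQ] at this
    exact this
  rwa [smulTop_ideal_eq, smulTop_ideal_eq, smulTop_ideal_eq] at hmem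

lemma wr_localize {S : Type} [CommRing S] [Algebra R S] [Module.Flat R S]
    {l : List R} (h : IsWeaklyRegular R l) :
    IsWeaklyRegular S (l.map (algebraMap R S)) := by
  have h1 : IsWeaklyRegular (TensorProduct R S R) l := h.isWeaklyRegular_lTensor
  have h2 : IsWeaklyRegular S l := ((TensorProduct.rid R S).isWeaklyRegular_congr l).mp h1
  exact (isWeaklyRegular_map_algebraMap_iff (S := S) (M := S) l).mpr h2

lemma global_colon [IsNoetherianRing R] (gs fs : List R)
    (h : IsWeaklyRegular R (gs ++ fs))
    (a : ℕ) (ha : 1 ≤ a) (z : R)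
    (hz : ∀ r ∈ gs, r * z ∈ Ideal.ofList (gs.map (· ^ a)) ⊔ Ideal.ofList (fs.map (· ^ a))) :
    z ∈ Ideal.span {gs.prod ^ (a - 1)} ⊔ Ideal.ofList (gs.map (· ^ a)) ⊔
      Ideal.ofList (fs.map (· ^ a)) := by
  set K : Ideal R := Ideal.span {gs.prod ^ (a - 1)} ⊔ Ideal.ofList (gs.map (· ^ a)) ⊔
      Ideal.ofList (fs.map (· ^ a)) with hK
  apply Ideal.mem_of_localization_maximal
  intro P hP
  set S := Localization.AtPrime P with hS
  letI : IsNoetherianRing S := IsLocalization.isNoetherianRing P.primeCompl S inferInstance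
  set φ : R →+* S := algebraMap R S with hφ
  -- computation of the image ideal
  have hpowmap : ∀ l : List R, (l.map (· ^ a)).map φ = (l.map φ).map (· ^ a) := by
    intro l
    rw [List.map_map, List.map_map]
    exact List.map_congr_left fun x _ => by simp [map_pow]
  have hpowmap' : ∀ l : List R, (l.map (· ^ (a - 1))).map φ = (l.map φ).map (· ^ (a - 1)) := by
    intro l
    rw [List.map_map, List.map_map]
    exact List.map_congr_left fun x _ => by simp [map_pow]
  have hmapK : Ideal.map φ K =
      Ideal.span {(gs.map φ).prod ^ (a - 1)} ⊔ Ideal.ofList ((gs.map φ).map (· ^ a)) ⊔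
        Ideal.ofList ((fs.map φ).map (· ^ a)) := by
    rw [hK, Ideal.map_sup, Ideal.map_sup, Ideal.map_ofList, Ideal.map_ofList,
      hpowmap, hpowmap, Ideal.map_span, Set.image_singleton, map_pow, map_list_prod]
  by_cases hunit : ∃ r ∈ gs ++ fs, IsUnit (φ r)
  · obtain ⟨r, hr, hu⟩ := hunit
    rcases List.mem_append.mp hr with hr | hr
    · -- r ∈ gs : use r * z ∈ J ≤ K
      have h1 := hz r hr
      have h2 : r * z ∈ K := by
        rw [hK, sup_assoc]
        exact Ideal.mem_sup_right h1
      have h3 : φ r * φ z ∈ Ideal.map φ K := by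
        rw [← map_mul]
        exact Ideal.mem_map_of_mem φ h2
      exact (Ideal.unit_mul_mem_iff_mem _ hu).mp h3
    · -- r ∈ fs : map K = ⊤
      have hK1 : r ^ a ∈ K := by
        rw [hK]
        refine Ideal.mem_sup_right (Ideal.subset_span ?_)
        exact List.mem_map_of_mem (f := (· ^ a)) hr
      have h1 : φ r ^ a ∈ Ideal.map φ K := by
        rw [← map_pow]
        exact Ideal.mem_map_of_mem φ hK1
      have h2 : Ideal.map φ K = ⊤ := Ideal.eq_top_of_isUnit_mem _ h1 (hu.pow a)
      rw [h2]
      trivial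
  · push_neg at hunit
    have hm : ∀ r ∈ (gs.map φ) ++ (fs.map φ), r ∈ IsLocalRing.maximalIdeal S := by
      intro r hr
      rw [← List.map_append] at hr
      obtain ⟨r₀, hr₀, rfl⟩ := List.mem_map.mp hr
      exact hunit r₀ hr₀
    have hwr : IsWeaklyRegular S ((gs.map φ) ++ (fs.map φ)) := by
      rw [← List.map_append]
      exact wr_localize h
    have hz' : ∀ r' ∈ gs.map φ, r' * φ z ∈ Ideal.ofList ((gs.map φ).map (· ^ a)) ⊔
        Ideal.ofList ((fs.map φ).map (· ^ a)) := by
      intro r' hr'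
      obtain ⟨r, hr, rfl⟩ := List.mem_map.mp hr'
      have h1 := Ideal.mem_map_of_mem φ (hz r hr)
      rw [map_mul] at h1
      have h2 : Ideal.map φ (Ideal.ofList (gs.map (· ^ a)) ⊔ Ideal.ofList (fs.map (· ^ a)))
          = Ideal.ofList ((gs.map φ).map (· ^ a)) ⊔ Ideal.ofList ((fs.map φ).map (· ^ a)) := by
        rw [Ideal.map_sup, Ideal.map_ofList, Ideal.map_ofList, hpowmap, hpowmap]
      rwa [h2] at h1
    have := local_colon (gs.map φ) (fs.map φ) hwr hm a ha (φ z) hz'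
    rwa [hmapK]



/-- Let `R` be Noetherian and `g 0, …, g (t-1), f 0, …, f (c-1)` a regular
sequence, `G = ∏ g i`.  Then for every `a ≥ 1`,
`((𝐠^{[a]} + 𝐟^{[a]}) : 𝐠) = G^{a-1} R + 𝐠^{[a]} + 𝐟^{[a]}`, and the image of the
multiplication-by-`G^{a-1}` map `R/(𝐠 + 𝐟^{[a]}) → R/(𝐠^{[a]} + 𝐟^{[a]})` is exactly the
annihilator of `𝐠` in `R/(𝐠^{[a]} + 𝐟^{[a]})`. -/
theorem statement6 (R : Type) [CommRing R] [IsNoetherianRing R]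
    (t c : ℕ) (g : Fin t → R) (f : Fin c → R)
    (hreg : RingTheory.Sequence.IsRegular R (List.ofFn g ++ List.ofFn f))
    (a : ℕ) (ha : 1 ≤ a) :
    ((Ideal.span (Set.range fun i => g i ^ a) ⊔ Ideal.span (Set.range fun i => f i ^ a)).colon
        (Ideal.span (Set.range g))
      = Ideal.span {(∏ i, g i) ^ (a - 1)} ⊔ Ideal.span (Set.range fun i => g i ^ a) ⊔
          Ideal.span (Set.range fun i => f i ^ a))
    ∧ ∀ ψ : (R ⧸ (Ideal.span (Set.range g) ⊔ Ideal.span (Set.range fun i => f i ^ a))) →ₗ[R]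
          (R ⧸ (Ideal.span (Set.range fun i => g i ^ a) ⊔
                  Ideal.span (Set.range fun i => f i ^ a))),
        (∀ r : R, ψ (Ideal.Quotient.mk _ r) = Ideal.Quotient.mk _ ((∏ i, g i) ^ (a - 1) * r)) →
        LinearMap.range ψ
          = Submodule.torsionBySet R
              (R ⧸ (Ideal.span (Set.range fun i => g i ^ a) ⊔
                      Ideal.span (Set.range fun i => f i ^ a)))
              (Ideal.span (Set.range g) : Set R) := by
  classical
  have hwr : RingTheory.Sequence.IsWeaklyRegular R (List.ofFn g ++ List.ofFn f) :=
    hreg.toIsWeaklyRegular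
  set gs : List R := List.ofFn g with hgs
  set fs : List R := List.ofFn f with hfs
  set Ja : Ideal R := Ideal.span (Set.range fun i => g i ^ a) ⊔
      Ideal.span (Set.range fun i => f i ^ a) with hJa
  have hga : Ideal.span (Set.range fun i => g i ^ a) = Ideal.ofList (gs.map (· ^ a)) := by
    apply congrArg Ideal.span
    ext x
    simp only [Set.mem_range, Set.mem_setOf_eq, List.mem_map, hgs, List.mem_ofFn]
    constructor
    · rintro ⟨i, rfl⟩; exact ⟨g i, ⟨i, rfl⟩, rfl⟩
    · rintro ⟨y, ⟨i, rfl⟩, rfl⟩; exact ⟨i, rfl⟩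
  have hfa : Ideal.span (Set.range fun i => f i ^ a) = Ideal.ofList (fs.map (· ^ a)) := by
    apply congrArg Ideal.span
    ext x
    simp only [Set.mem_range, Set.mem_setOf_eq, List.mem_map, hfs, List.mem_ofFn]
    constructor
    · rintro ⟨i, rfl⟩; exact ⟨f i, ⟨i, rfl⟩, rfl⟩
    · rintro ⟨y, ⟨i, rfl⟩, rfl⟩; exact ⟨i, rfl⟩
  have hprod : gs.prod = ∏ i, g i := List.prod_ofFn
  -- the "easy" multiplication fact
  have hGmul : ∀ i : Fin t, (∏ j, g j) ^ (a - 1) * g i ∈ Ja := by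
    intro i
    have hane : a - 1 + 1 = a := by omega
    have key : (∏ j, g j) ^ (a - 1) * g i =
        g i ^ a * ∏ j ∈ Finset.univ.erase i, g j ^ (a - 1) := by
      rw [← Finset.prod_pow, ← Finset.mul_prod_erase Finset.univ (fun j => g j ^ (a - 1))
        (Finset.mem_univ i), mul_right_comm, ← pow_succ, hane]
    rw [key]
    exact Ideal.mem_sup_left (Ideal.mul_mem_right _ _ (Ideal.subset_span ⟨i, rfl⟩))
  have hcolG : ∀ p ∈ Ideal.span (Set.range g), (∏ i, g i) ^ (a - 1) * p ∈ Ja := by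
    intro p hp
    induction hp using Submodule.span_induction with
    | mem x hx =>
      obtain ⟨i, rfl⟩ := hx
      exact hGmul i
    | zero => rw [mul_zero]; exact Ja.zero_mem
    | add x y _ _ hx hy => rw [mul_add]; exact Ja.add_mem hx hy
    | smul c x _ hx =>
      rw [smul_eq_mul, mul_left_comm]
      exact Ideal.mul_mem_left _ c hx
  -- Part 1
  have part1 : (Ja.colon (Ideal.span (Set.range g)))
      = Ideal.span {(∏ i, g i) ^ (a - 1)} ⊔ Ideal.span (Set.range fun i => g i ^ a) ⊔
          Ideal.span (Set.range fun i => f i ^ a) := by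
    apply le_antisymm
    · intro z hz
      have hz' : ∀ r ∈ gs, r * z ∈ Ideal.ofList (gs.map (· ^ a)) ⊔
          Ideal.ofList (fs.map (· ^ a)) := by
        intro r hr
        have hrg : r ∈ Ideal.span (Set.range g) := by
          refine Ideal.subset_span ?_
          rw [hgs, List.mem_ofFn] at hr
          exact hr
        have hm := Submodule.mem_colon.mp hz r hrg
        rw [smul_eq_mul, mul_comm] at hm
        rw [hJa, hga, hfa] at hm
        exact hm
      have hmem := global_colon gs fs hwr a ha z hz'
      rw [hprod, ← hga, ← hfa] at hmem
      exact hmem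
    · refine sup_le (sup_le ?_ ?_) ?_
      · rw [Ideal.span_le]
        intro x hx
        rw [Set.mem_singleton_iff] at hx
        subst hx
        rw [SetLike.mem_coe, Submodule.mem_colon]
        intro p hp
        rw [smul_eq_mul]
        exact hcolG p hp
      · intro x hx
        rw [Submodule.mem_colon]
        intro p hp
        rw [smul_eq_mul]
        exact Ideal.mul_mem_right p _ (Ideal.mem_sup_left hx)
      · intro x hx
        rw [Submodule.mem_colon]
        intro p hp
        rw [smul_eq_mul]
        exact Ideal.mul_mem_right p _ (Ideal.mem_sup_right hx)
  refine ⟨part1, ?_⟩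
  -- Part 2
  intro ψ hψ
  ext x
  simp only [LinearMap.mem_range]
  constructor
  · rintro ⟨y, rfl⟩
    obtain ⟨r, rfl⟩ := Ideal.Quotient.mk_surjective y
    rw [hψ r]
    rw [Submodule.mem_torsionBySet_iff]
    rintro ⟨s, hs⟩
    have hs' : s ∈ Ideal.span (Set.range g) := hs
    have : s • (Ideal.Quotient.mk Ja ((∏ i, g i) ^ (a - 1) * r)) =
        Ideal.Quotient.mk Ja (s * ((∏ i, g i) ^ (a - 1) * r)) := rfl
    rw [this, Ideal.Quotient.eq_zero_iff_mem,
      show s * ((∏ i, g i) ^ (a - 1) * r) = ((∏ i, g i) ^ (a - 1) * s) * r by ring]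
    exact Ideal.mul_mem_right r _ (hcolG s hs')
  · intro hx
    obtain ⟨z, rfl⟩ := Ideal.Quotient.mk_surjective x
    rw [Submodule.mem_torsionBySet_iff] at hx
    have hzc : z ∈ Ja.colon (Ideal.span (Set.range g)) := by
      rw [Submodule.mem_colon]
      intro p hp
      have := hx ⟨p, hp⟩
      have h0 : Ideal.Quotient.mk Ja (p * z) = 0 := this
      rw [Ideal.Quotient.eq_zero_iff_mem] at h0
      rw [smul_eq_mul, mul_comm]
      exact h0
    rw [part1] at hzc
    rw [Submodule.mem_sup] at hzc
    obtain ⟨w, hw, j, hj, rfl⟩ := hzc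
    rw [Submodule.mem_sup] at hw
    obtain ⟨w₁, hw₁, j₁, hj₁, rfl⟩ := hw
    rw [Ideal.mem_span_singleton'] at hw₁
    obtain ⟨r, rfl⟩ := hw₁
    refine ⟨Ideal.Quotient.mk _ r, ?_⟩
    rw [hψ r]
    rw [Ideal.Quotient.eq]
    have : (∏ i, g i) ^ (a - 1) * r - (r * (∏ i, g i) ^ (a - 1) + j₁ + j) =
        -(j₁ + j) := by ring
    rw [this]
    exact Ja.neg_mem (Ja.add_mem (Ideal.mem_sup_left hj₁) (Ideal.mem_sup_right hj))
end

section
/- Let R be a Noetherian ring of prime characteristic p > 0 and M a finitely generated R⟨F⟩-module, where R⟨F⟩ = R{F}/(r^p F − F r : r ∈ R). Then the support of M as an R-module is a Zariski closed subset of Spec R. -/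
/-!
For a prime `𝔭`, the elements of `M` killed by some element outside `𝔭` form an `R`-submodule,
and it is stable under `F` because `c • m = 0` gives `c ^ p • F m = F (c • m) = 0`. If `𝔭` lies
outside the support of the `R`-submodule `N` spanned by the generators, this submodule contains
`N`, hence is all of `M`, so `𝔭 ∉ Supp M`. Thus `Supp M = Supp N = V(ann N)`, as `N` is finitely
generated.
-/

open Submodule PrimeSpectrum

variable {R M : Type*} [CommRing R] [AddCommGroup M] [Module R M]

lemma Module.notMem_support_iff_torsion'_eq_top (𝔭 : PrimeSpectrum R) :
    𝔭 ∉ Module.support R M ↔ torsion' R M 𝔭.asIdeal.primeCompl = ⊤ := by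
  simp only [Module.notMem_support_iff', eq_top_iff', mem_torsion'_iff, Subtype.exists,
    Submonoid.mk_smul, Ideal.mem_primeCompl_iff, exists_prop]

lemma Submodule.notMem_support_iff_le_torsion' (N : Submodule R M) (𝔭 : PrimeSpectrum R) :
    𝔭 ∉ Module.support R N ↔ N ≤ torsion' R M 𝔭.asIdeal.primeCompl := by
  simp only [Module.notMem_support_iff', SetLike.le_def, mem_torsion'_iff, Subtype.forall,
    Subtype.exists, Submonoid.mk_smul, Ideal.mem_primeCompl_iff, exists_prop, SetLike.mk_smul_mk,
    Submodule.mk_eq_zero]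

lemma Submodule.apply_mem_torsion' {p : ℕ} {F : M → M} (hF0 : F 0 = 0)
    (hF : ∀ (r : R) (x : M), F (r • x) = r ^ p • F x) (S : Submonoid R) {x : M}
    (hx : x ∈ torsion' R M S) : F x ∈ torsion' R M S := by
  obtain ⟨a, ha⟩ := hx
  exact ⟨a ^ p, by
    rw [Submonoid.smul_def, SubmonoidClass.coe_pow, ← hF, ← Submonoid.smul_def, ha, hF0]⟩

theorem Module.support_eq_support_of_forall_stable_eq_top {p : ℕ} {F : M → M} (hF0 : F 0 = 0)
    (hF : ∀ (r : R) (x : M), F (r • x) = r ^ p • F x) (N : Submodule R M)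
    (hN : ∀ N' : Submodule R M, N ≤ N' → (∀ x ∈ N', F x ∈ N') → N' = ⊤) :
    Module.support R M = Module.support R N := by
  refine subset_antisymm (fun 𝔭 h𝔭 ↦ ?_) (support_subset_of_injective _ N.injective_subtype)
  by_contra hN𝔭
  rw [N.notMem_support_iff_le_torsion'] at hN𝔭
  exact (notMem_support_iff_torsion'_eq_top 𝔭).mpr
    (hN _ hN𝔭 fun _ ↦ apply_mem_torsion' hF0 hF _) h𝔭

theorem statement17_general (R : Type) [CommRing R]
    (p : ℕ)
    (M : Type) [AddCommGroup M] [Module R M]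
    (F : M → M)
    (hadd : ∀ x y : M, F (x + y) = F x + F y)
    (hplin : ∀ (r : R) (x : M), F (r • x) = r ^ p • F x)
    (hfg : ∃ s : Finset M, ∀ N : Submodule R M,
      (s : Set M) ⊆ N → (∀ x ∈ N, F x ∈ N) → N = ⊤) :
    IsClosed (Module.support R M) := by
  obtain ⟨s, hs⟩ := hfg
  have hF0 : F 0 = 0 := by simpa using hadd 0 0
  rw [Module.support_eq_support_of_forall_stable_eq_top hF0 hplin (span R s)
    fun N hsN hN ↦ hs N (span_le.mp hsN) hN, Module.support_eq_zeroLocus]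
  exact isClosed_zeroLocus _

/-- Let `R` be a Noetherian ring of prime characteristic `p > 0` and `M`
a finitely generated left module over the twisted polynomial ring `R⟨F⟩`, i.e. an
`R`-module equipped with an additive map `F : M → M` with `F (r • m) = r^p • F m`, which is
generated over `R⟨F⟩` by finitely many elements (no proper `R`-submodule containing them is
stable under `F`).  Then the support of `M` as an `R`-module is Zariski closed. -/
theorem statement17 (R : Type) [CommRing R] [IsNoetherianRing R]
    (p : ℕ) [Fact p.Prime] [CharP R p]
    (M : Type) [AddCommGroup M] [Module R M]
    (F : M → M)
    (hadd : ∀ x y : M, F (x + y) = F x + F y)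
    (hplin : ∀ (r : R) (x : M), F (r • x) = r ^ p • F x)
    (hfg : ∃ s : Finset M, ∀ N : Submodule R M,
      (s : Set M) ⊆ N → (∀ x ∈ N, F x ∈ N) → N = ⊤) :
    IsClosed (Module.support R M) :=
  statement17_general R p M F hadd hplin hfg
end

section
/- Let R be a regular ring of prime characteristic p > 0, f_1,…,f_c a regular sequence, f = ∏f_i. For each q = p^e, the Fedder-action structure map R/𝐟^{[q+1]} → R/𝐟^{[qp+1]} at the level of the directed system defining H^c_𝐟(R)_fed, given by r ↦ f^{p−1}r^p (composed with the identification), has kernel after Frobenius base change described by: the kernel of the induced surjection R/𝐟^{[q+p]} → R/𝐟^{[q+1]} is 𝐟^{[q+1]}/𝐟^{[q+p]}, and 𝐟^{[q+1]}/𝐟^{[q+p]} = (𝐟^{[q+p]} : f^{p−1})/𝐟^{[q+p]}; consequently the kernel of the structure morphism F_R(H^c_𝐟(R)_fed) → H^c_𝐟(R)_fed equals (0 :_{H^c_𝐟(R)} f^{p−1}). -/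
/-- The ideal `(f 0 ^ a, …, f (c-1) ^ a)` of `a`-th powers of a sequence. -/
def fpow {R : Type} [CommRing R] {c : ℕ} (f : Fin c → R) (a : ℕ) : Ideal R :=
  Ideal.span (Set.range fun i => f i ^ a)

/-- A Noetherian local ring is *regular* if its maximal ideal can be generated by
`dim` many elements. -/
def IsRegularLocal (A : Type) [CommRing A] [IsLocalRing A] : Prop :=
  IsNoetherianRing A ∧
    ∃ s : Finset A, Ideal.span (s : Set A) = IsLocalRing.maximalIdeal A ∧
      (s.card : WithBot (WithTop ℕ)) = ringKrullDim A

/-- A commutative ring is *regular* if it is Noetherian and all its localizations at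
primes are regular local rings. -/
def IsRegularRingOld (R : Type) [CommRing R] : Prop :=
  IsNoetherianRing R ∧
    ∀ (P : Ideal R) [P.IsPrime], IsRegularLocal (Localization.AtPrime P)

/-!
For a regular sequence `l` and `b < a`, the colon ideal `(l^{[a]} : (∏ l)^b)` is `l^{[a-b]}`.
The inclusion `⊇` holds in any ring. For `⊆`, localize at a maximal ideal `P`: if some element
of `l` lies outside `P`, the right-hand side becomes the unit ideal; otherwise `l` lies in the
maximal ideal of a Noetherian local ring, where regular sequences may be permuted and raised to
powers. So the head `x` of `l` is regular modulo the `a`-th powers of the tail `t`, and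
`x^b s ∈ t^{[a]} + (x^a)` gives `s ∈ t^{[a]} + (x^{a-b})`; induction on the length of `l`,
with `x^{a-b}` moved into the base ideal, finishes.

The statement about the Fedder structure map is formal: `θ` sends the class of `r` at level
`q+p-1` to its class at level `q`, and the transition from level `q` to level `q+p-1` multiplies
by `F^{p-1}`; since these levels are cofinal, `θ` is multiplication by `F^{p-1}`.
-/

section Ideal

variable {S : Type*} [CommRing S]

lemma Ideal.map_mkQ_sup (I J : Ideal S) :
    Submodule.map I.mkQ (I ⊔ J) = J • (⊤ : Submodule S (S ⧸ I)) := by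
  rw [Submodule.map_sup, Submodule.mkQ_map_self, bot_sup_eq, ← Ideal.mul_top J,
    ← smul_eq_mul, Submodule.map_smul'', Submodule.map_top, Submodule.range_mkQ, smul_eq_mul,
    Ideal.mul_top]

noncomputable def Ideal.quotientSMulTopEquivQuotientSup (I J : Ideal S) :
    ((S ⧸ I) ⧸ J • (⊤ : Submodule S (S ⧸ I))) ≃ₗ[S] S ⧸ (I ⊔ J) :=
  (Submodule.quotEquivOfEq _ _ (Ideal.map_mkQ_sup I J).symm).trans
    (Submodule.quotientQuotientEquivQuotient I (I ⊔ J) le_sup_left)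

lemma Ideal.mem_sup_span_pow_sub_of_pow_mul_mem {J : Ideal S} {x : S}
    (hx : IsSMulRegular (S ⧸ J) x) {a b : ℕ} (hba : b ≤ a) {s : S}
    (hs : x ^ b * s ∈ J ⊔ Ideal.span {x ^ a}) : s ∈ J ⊔ Ideal.span {x ^ (a - b)} := by
  obtain ⟨c, rfl⟩ := Nat.exists_eq_add_of_le hba
  rw [Nat.add_sub_cancel_left]
  obtain ⟨j, hj, _, hv, hsum⟩ := Submodule.mem_sup.mp hs
  obtain ⟨v, rfl⟩ := Ideal.mem_span_singleton'.mp hv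
  have hxb : x ^ b * (s - v * x ^ c) ∈ J := by
    have : x ^ b * (s - v * x ^ c) = j := by linear_combination -hsum
    exact this ▸ hj
  rw [← sub_add_cancel s (v * x ^ c)]
  exact Submodule.add_mem_sup (mem_of_isSMulRegular_quotient_of_smul_mem (hx.pow b) hxb)
    (Ideal.mul_mem_left _ _ (Ideal.mem_span_singleton_self _))

lemma Ideal.ofList_map_pow_sub_le_colon (l : List S) {a b : ℕ} (hba : b ≤ a) :
    Ideal.ofList (l.map (· ^ (a - b))) ≤
      (Ideal.ofList (l.map (· ^ a))).colon (Ideal.span {(l.map (· ^ b)).prod}) := by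
  refine Ideal.span_le.mpr fun _ hy => ?_
  obtain ⟨x, hx, rfl⟩ := List.mem_map.mp hy
  obtain ⟨c, hc⟩ := List.dvd_prod (List.mem_map_of_mem (f := (· ^ b)) hx)
  rw [SetLike.mem_coe, Ideal.mem_colon_span_singleton, hc, ← mul_assoc, ← pow_add,
    Nat.sub_add_cancel hba]
  exact Ideal.mul_mem_right _ _ (Ideal.subset_span (List.mem_map_of_mem hx))

end Ideal

namespace RingTheory.Sequence

section Quotient

variable {S : Type*} [CommRing S]

lemma isWeaklyRegular_quotient_cons_iff (I : Ideal S) (x : S) (t : List S) :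
    IsWeaklyRegular (S ⧸ I) (x :: t) ↔
      IsSMulRegular (S ⧸ I) x ∧ IsWeaklyRegular (S ⧸ (I ⊔ Ideal.span {x})) t := by
  rw [isWeaklyRegular_cons_iff,
    ← (Ideal.quotientSMulTopEquivQuotientSup I _).isWeaklyRegular_congr,
    Submodule.ideal_span_singleton_smul]

lemma IsWeaklyRegular.append_pow {M : Type*} [AddCommGroup M] [Module S M] {t : List S} {x : S}
    (h : IsWeaklyRegular M (t ++ [x])) (k : ℕ) : IsWeaklyRegular M (t ++ [x ^ k]) := by
  rw [isWeaklyRegular_append_iff, isWeaklyRegular_singleton_iff] at h ⊢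
  exact ⟨h.1, h.2.pow k⟩

lemma IsWeaklyRegular.isSMulRegular_quotient_sup_ofList {I : Ideal S} {t : List S} {x : S}
    (h : IsWeaklyRegular (S ⧸ I) (t ++ [x])) : IsSMulRegular (S ⧸ (I ⊔ Ideal.ofList t)) x := by
  rw [isWeaklyRegular_append_iff, isWeaklyRegular_singleton_iff] at h
  exact (Ideal.quotientSMulTopEquivQuotientSup I _).isSMulRegular_congr x |>.mp h.2

end Quotient

section LocalRing

open IsLocalRing

variable {S : Type*} [CommRing S] [IsLocalRing S] [IsNoetherianRing S] {I : Ideal S}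

lemma IsWeaklyRegular.cons_pow {x : S} {t : List S} (h : IsWeaklyRegular (S ⧸ I) (x :: t))
    (hm : ∀ y ∈ x :: t, y ∈ maximalIdeal S) {k : ℕ} (hk : 1 ≤ k) :
    IsWeaklyRegular (S ⧸ I) (x ^ k :: t) := by
  refine isWeaklyRegular_of_perm_of_subset_maximalIdeal
    ((isWeaklyRegular_of_perm_of_subset_maximalIdeal h
      (List.perm_append_singleton x t).symm hm).append_pow k)
    (List.perm_append_singleton _ t) ?_
  simp only [List.mem_append, List.mem_singleton]
  rintro y (hy | rfl)
  · exact hm y (List.mem_cons_of_mem x hy)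
  · exact Ideal.pow_mem_of_mem _ (hm x List.mem_cons_self) k hk

lemma IsWeaklyRegular.map_pow : ∀ {l : List S} {I : Ideal S},
    IsWeaklyRegular (S ⧸ I) l → (∀ y ∈ l, y ∈ maximalIdeal S) → ∀ {k : ℕ}, 1 ≤ k →
      IsWeaklyRegular (S ⧸ I) (l.map (· ^ k))
  | [], _, _, _, _, _ => IsWeaklyRegular.nil S _
  | x :: t, I, h, hm, k, hk => by
    obtain ⟨hx, ht⟩ := (isWeaklyRegular_quotient_cons_iff I _ t).mp (h.cons_pow hm hk)
    exact (isWeaklyRegular_quotient_cons_iff I _ _).mpr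
      ⟨hx, ht.map_pow (fun y hy => hm y (List.mem_cons_of_mem x hy)) hk⟩

lemma IsWeaklyRegular.isSMulRegular_quotient_sup_ofList_tail {x : S} {t : List S}
    (h : IsWeaklyRegular (S ⧸ I) (x :: t)) (hm : ∀ y ∈ x :: t, y ∈ maximalIdeal S) :
    IsSMulRegular (S ⧸ (I ⊔ Ideal.ofList t)) x :=
  (isWeaklyRegular_of_perm_of_subset_maximalIdeal h
    (List.perm_append_singleton x t).symm hm).isSMulRegular_quotient_sup_ofList

lemma IsWeaklyRegular.mem_sup_ofList_of_mul_prod_mem : ∀ {l : List S} {I : Ideal S},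
    IsWeaklyRegular (S ⧸ I) l → (∀ y ∈ l, y ∈ maximalIdeal S) → ∀ {a b : ℕ}, b < a →
      ∀ {r : S}, r * (l.map (· ^ b)).prod ∈ I ⊔ Ideal.ofList (l.map (· ^ a)) →
        r ∈ I ⊔ Ideal.ofList (l.map (· ^ (a - b)))
  | [], _, _, _, _, _, _, _, hr => by simpa using hr
  | x :: t, I, h, hm, a, b, hba, r, hr => by
    have htm : ∀ y ∈ t, y ∈ maximalIdeal S := fun y hy => hm y (List.mem_cons_of_mem x hy)
    have hpowm : ∀ y ∈ (x :: t).map (· ^ a), y ∈ maximalIdeal S := by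
      simpa using fun y hy => Ideal.pow_mem_of_mem _ (hm y hy) a (by omega)
    have hx : IsSMulRegular (S ⧸ (I ⊔ Ideal.ofList (t.map (· ^ a)))) x :=
      (IsSMulRegular.pow_iff (by omega)).mp
        ((h.map_pow hm (by omega)).isSMulRegular_quotient_sup_ofList_tail hpowm)
    have hxr : x ^ b * (r * (t.map (· ^ b)).prod) ∈
        I ⊔ Ideal.ofList (t.map (· ^ a)) ⊔ Ideal.span {x ^ a} := by
      simp only [List.map_cons, List.prod_cons, Ideal.ofList_cons] at hr
      rw [sup_right_comm, sup_assoc]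
      convert hr using 1
      ring
    have hr' := Ideal.mem_sup_span_pow_sub_of_pow_mul_mem hx hba.le hxr
    rw [sup_right_comm] at hr'
    have ht := ((isWeaklyRegular_quotient_cons_iff I _ t).mp
      (h.cons_pow hm (k := a - b) (by omega))).2
    simpa only [List.map_cons, Ideal.ofList_cons, ← sup_assoc] using
      ht.mem_sup_ofList_of_mul_prod_mem htm hba hr'

end LocalRing

lemma IsWeaklyRegular.colon_ofList_map_pow {R : Type*} [CommRing R] [IsNoetherianRing R]
    {l : List R} (h : IsWeaklyRegular R l) {a b : ℕ} (hba : b < a) :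
    (Ideal.ofList (l.map (· ^ a))).colon (Ideal.span {(l.map (· ^ b)).prod}) =
      Ideal.ofList (l.map (· ^ (a - b))) := by
  refine le_antisymm (fun r hr => ?_) (Ideal.ofList_map_pow_sub_le_colon l hba.le)
  rw [Ideal.mem_colon_span_singleton] at hr
  refine Ideal.mem_of_localization_maximal fun P hP => ?_
  let φ := algebraMap R (Localization.AtPrime P)
  have hφ : ∀ n, (l.map (· ^ n)).map φ = (l.map φ).map (· ^ n) := by simp [Function.comp_def]
  rw [Ideal.map_ofList, hφ]
  by_cases hl : ∀ x ∈ l, x ∈ P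
  · have hreg : IsWeaklyRegular (Localization.AtPrime P ⧸ (⊥ : Ideal _)) (l.map φ) :=
      ((Submodule.quotEquivOfEqBot ⊥ rfl).isWeaklyRegular_congr _).mpr
        (h.of_isLocalization _ P.primeCompl)
    have hm : ∀ y ∈ l.map φ, y ∈ IsLocalRing.maximalIdeal (Localization.AtPrime P) := by
      intro _ hy
      obtain ⟨x, hx, rfl⟩ := List.mem_map.mp hy
      exact (IsLocalization.AtPrime.to_map_mem_maximal_iff _ P x).mpr (hl x hx)
    have hmem := Ideal.mem_map_of_mem φ hr
    rw [map_mul, map_list_prod, hφ, Ideal.map_ofList, hφ, ← bot_sup_eq (Ideal.ofList _)] at hmem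
    simpa using hreg.mem_sup_ofList_of_mul_prod_mem hm hba hmem
  · obtain ⟨x, hxl, hxP⟩ : ∃ x ∈ l, x ∉ P := by simpa using hl
    have hunit : IsUnit (φ x ^ (a - b)) :=
      ((IsLocalization.AtPrime.isUnit_to_map_iff _ P x).mpr hxP).pow _
    have hmem : φ x ^ (a - b) ∈ Ideal.ofList ((l.map φ).map (· ^ (a - b))) :=
      Ideal.subset_span (List.mem_map_of_mem (List.mem_map_of_mem hxl))
    rw [Ideal.eq_top_of_isUnit_mem _ hmem hunit]
    exact Submodule.mem_top

end RingTheory.Sequence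

namespace Module.DirectLimit

variable {R : Type*} [CommRing R] {I : ℕ → Ideal R} {g : R}
  {φ : ∀ i j : ℕ, i ≤ j → (R ⧸ I i) →ₗ[R] (R ⧸ I j)}

lemma of_mk_eq_of_mk_pow_mul
    (hφ : ∀ i j hij r, φ i j hij (Ideal.Quotient.mk _ r) = Ideal.Quotient.mk _ (g ^ (j - i) * r))
    {i j : ℕ} (hij : i ≤ j) (r : R) :
    of R ℕ (fun a => R ⧸ I a) φ i (Ideal.Quotient.mk _ r) =
      of R ℕ (fun a => R ⧸ I a) φ j (Ideal.Quotient.mk _ (g ^ (j - i) * r)) := by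
  rw [← hφ i j hij, of_f]

lemma linearMap_apply_eq_pow_smul
    (hφ : ∀ i j hij r, φ i j hij (Ideal.Quotient.mk _ r) = Ideal.Quotient.mk _ (g ^ (j - i) * r))
    (θ : DirectLimit (fun a => R ⧸ I a) φ →ₗ[R] DirectLimit (fun a => R ⧸ I a) φ)
    {s : ℕ → ℕ} {k : ℕ} (hs : ∀ i, ∃ e, i ≤ s e + k)
    (hθ : ∀ e r, θ (of R ℕ _ φ (s e + k) (Ideal.Quotient.mk _ r)) =
      of R ℕ _ φ (s e) (Ideal.Quotient.mk _ r))
    (x : DirectLimit (fun a => R ⧸ I a) φ) : θ x = g ^ k • x := by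
  obtain ⟨i, y, rfl⟩ := exists_of x
  obtain ⟨r, rfl⟩ := Ideal.Quotient.mk_surjective y
  obtain ⟨e, hi⟩ := hs i
  rw [of_mk_eq_of_mk_pow_mul hφ hi, hθ, ← map_smul, Algebra.smul_def,
    Ideal.Quotient.algebraMap_eq, ← map_mul, of_mk_eq_of_mk_pow_mul hφ (Nat.le_add_right (s e) k),
    Nat.add_sub_cancel_left]

end Module.DirectLimit

lemma fpow_eq_ofList {R : Type} [CommRing R] {c : ℕ} (f : Fin c → R) (a : ℕ) :
    fpow f a = Ideal.ofList ((List.ofFn f).map (· ^ a)) := by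
  rw [fpow, Ideal.ofList, List.map_ofFn]
  congr 1
  ext
  simp

lemma List.prod_map_pow_ofFn {R : Type*} [CommRing R] {c : ℕ} (f : Fin c → R) (b : ℕ) :
    ((List.ofFn f).map (· ^ b)).prod = (∏ k, f k) ^ b := by
  rw [List.map_ofFn, List.prod_ofFn]
  exact Finset.prod_pow _ _ _

theorem statement18_general (R : Type) [CommRing R]
    (p : ℕ) [Fact p.Prime]
    (hreg : IsRegularRingOld R)
    (c : ℕ) (f : Fin c → R)
    (hrs : RingTheory.Sequence.IsRegular R (List.ofFn f))
    (φ : ∀ i j : ℕ, i ≤ j → (R ⧸ fpow f (i + 1)) →ₗ[R] (R ⧸ fpow f (j + 1)))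
    (hφ : ∀ (i j : ℕ) (hij : i ≤ j) (r : R),
      φ i j hij (Ideal.Quotient.mk _ r) = Ideal.Quotient.mk _ ((∏ k, f k) ^ (j - i) * r)) :
    (∀ e : ℕ, (fpow f (p ^ e + p)).colon (Ideal.span {(∏ k, f k) ^ (p - 1)})
        = fpow f (p ^ e + 1))
    ∧ ∀ θ : Module.DirectLimit (fun a => R ⧸ fpow f (a + 1)) φ →ₗ[R]
          Module.DirectLimit (fun a => R ⧸ fpow f (a + 1)) φ,
        (∀ (e : ℕ) (r : R),
          θ (Module.DirectLimit.of R ℕ (fun a => R ⧸ fpow f (a + 1)) φ (p ^ e + p - 1)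
              (Ideal.Quotient.mk _ r))
            = Module.DirectLimit.of R ℕ (fun a => R ⧸ fpow f (a + 1)) φ (p ^ e)
                (Ideal.Quotient.mk _ r)) →
        ∀ x : Module.DirectLimit (fun a => R ⧸ fpow f (a + 1)) φ,
          θ x = 0 ↔ (∏ k, f k) ^ (p - 1) • x = 0 := by
  have hp : p.Prime := Fact.out
  have hp1 := hp.one_le
  have : IsNoetherianRing R := hreg.1
  refine ⟨fun e => ?_, fun θ hθ x => ?_⟩
  · rw [fpow_eq_ofList, fpow_eq_ofList, ← List.prod_map_pow_ofFn,
      hrs.toIsWeaklyRegular.colon_ofList_map_pow (by omega),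
      show p ^ e + p - (p - 1) = p ^ e + 1 by omega]
  · have hθ' : ∀ e r, θ (Module.DirectLimit.of R ℕ _ φ (p ^ e + (p - 1)) (Ideal.Quotient.mk _ r))
        = Module.DirectLimit.of R ℕ _ φ (p ^ e) (Ideal.Quotient.mk _ r) := fun e r => by
      have h := hθ e r
      rwa [Nat.add_sub_assoc hp1] at h
    have hcofinal (i : ℕ) : ∃ e, i ≤ p ^ e + (p - 1) :=
      ⟨i, (Nat.lt_pow_self hp.one_lt).le.trans (Nat.le_add_right _ _)⟩
    rw [Module.DirectLimit.linearMap_apply_eq_pow_smul hφ θ hcofinal hθ']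

/-- Let `R` be regular of characteristic `p > 0`, `f 0, …, f (c-1)` a
regular sequence, `F = ∏ f i`, and realize `H^c_𝐟(R)` as the direct limit of `R/𝐟^{[a+1]}`
with multiplication-by-powers-of-`F` transition maps.  For each `q = p^e` the key colon
identity `(𝐟^{[q+p]} : F^{p-1}) = 𝐟^{[q+1]}` holds, so the kernel of the surjection
`R/𝐟^{[q+p]} ↠ R/𝐟^{[q+1]}` is `𝐟^{[q+1]}/𝐟^{[q+p]} = (𝐟^{[q+p]} : F^{p-1})/𝐟^{[q+p]}`;
consequently the kernel of the structure morphism of the Fedder action — the colimit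
`θ : H^c_𝐟(R) → H^c_𝐟(R)` of these surjections, i.e. the linear map sending the level
`q+p` class of `r` to its level `q+1` class — equals `(0 :_{H^c_𝐟(R)} F^{p-1})`. -/
theorem statement18 (R : Type) [CommRing R]
    (p : ℕ) [Fact p.Prime] [CharP R p]
    (hreg : IsRegularRingOld R)
    (c : ℕ) (hc : 1 ≤ c) (f : Fin c → R)
    (hrs : RingTheory.Sequence.IsRegular R (List.ofFn f))
    (φ : ∀ i j : ℕ, i ≤ j → (R ⧸ fpow f (i + 1)) →ₗ[R] (R ⧸ fpow f (j + 1)))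
    (hφ : ∀ (i j : ℕ) (hij : i ≤ j) (r : R),
      φ i j hij (Ideal.Quotient.mk _ r) = Ideal.Quotient.mk _ ((∏ k, f k) ^ (j - i) * r)) :
    (∀ e : ℕ, (fpow f (p ^ e + p)).colon (Ideal.span {(∏ k, f k) ^ (p - 1)})
        = fpow f (p ^ e + 1))
    ∧ ∀ θ : Module.DirectLimit (fun a => R ⧸ fpow f (a + 1)) φ →ₗ[R]
          Module.DirectLimit (fun a => R ⧸ fpow f (a + 1)) φ,
        (∀ (e : ℕ) (r : R),
          θ (Module.DirectLimit.of R ℕ (fun a => R ⧸ fpow f (a + 1)) φ (p ^ e + p - 1)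
              (Ideal.Quotient.mk _ r))
            = Module.DirectLimit.of R ℕ (fun a => R ⧸ fpow f (a + 1)) φ (p ^ e)
                (Ideal.Quotient.mk _ r)) →
        ∀ x : Module.DirectLimit (fun a => R ⧸ fpow f (a + 1)) φ,
          θ x = 0 ↔ (∏ k, f k) ^ (p - 1) • x = 0 :=
  statement18_general R p hreg c f hrs φ hφ
end
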